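/- arXiv:1703.09003 — 5 statements merged into one kernel-verified Lean document; each statement's English description precedes it below -/
import Mathlib

section
/- Let φ : 𝕋 → ℝ^d be a function of bounded variation on the circle and α irrational. If q ∈ ℕ satisfies |α - p/q| < 1/q² for some integer p coprime to q, then the Birkhoff sum φ_q(x) = Σ_{k=0}^{q-1} φ(x + kα) satisfies ‖φ_q(x) - q∫_𝕋 φ‖_∞ ≤ Var_𝕋(φ) for all x, where φ is assumed to have ∫_𝕋 φ = 0, so ‖φ_q‖_∞ ≤ Var_𝕋(φ). (Denjoy–Koksma inequality.) -/
open Set MeasureTheory intervalIntegral Finset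

section DK

variable {d : ℕ} {φ : ℝ → EuclideanSpace ℝ (Fin d)}

lemma DK.phi_int (hper : Function.Periodic φ 1) (t : ℝ) (n : ℤ) : φ (t + n) = φ t := by
  simpa using (hper.int_mul n) t

lemma DK.var_translate (hper : Function.Periodic φ 1) (n : ℤ) (c e : ℝ) :
    eVariationOn φ (Set.Icc (c + n) (e + n)) = eVariationOn φ (Set.Icc c e) := by
  have hmono : MonotoneOn (fun t : ℝ => t + (n : ℝ)) (Set.Icc c e) :=
    fun u _ v _ huv => by dsimp only; linarith
  have h1 := eVariationOn.comp_eq_of_monotoneOn φ (fun t : ℝ => t + (n : ℝ)) hmono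
  have h2 : φ ∘ (fun t : ℝ => t + (n : ℝ)) = φ := by
    funext t; exact DK.phi_int hper t n
  rw [h2, Set.image_add_const_Icc] at h1
  exact h1.symm

lemma DK.var_unit (hper : Function.Periodic φ 1) (c : ℝ) :
    eVariationOn φ (Set.Icc c (c + 1)) = eVariationOn φ (Set.Icc 0 1) := by
  have key : ∀ bb : ℝ, 0 ≤ bb → bb ≤ 1 →
      eVariationOn φ (Set.Icc bb (bb + 1)) = eVariationOn φ (Set.Icc 0 1) := by
    intro bb hb0 hb1
    have h2 : eVariationOn φ (Set.Icc 1 (bb + 1)) = eVariationOn φ (Set.Icc 0 bb) := by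
      have := DK.var_translate hper 1 0 bb
      rw [show ((1:ℤ):ℝ) = 1 by norm_num, zero_add] at this
      exact this
    have hA := eVariationOn.Icc_add_Icc φ (s := (Set.univ : Set ℝ)) hb1
      (by linarith : (1:ℝ) ≤ bb + 1) (Set.mem_univ _)
    have hB := eVariationOn.Icc_add_Icc φ (s := (Set.univ : Set ℝ)) hb0 hb1 (Set.mem_univ _)
    simp only [Set.univ_inter] at hA hB
    rw [← hA, h2, ← hB, add_comm]
  have htrans := DK.var_translate hper ⌊c⌋ (Int.fract c) (Int.fract c + 1)
  have h1 : Int.fract c + (⌊c⌋ : ℝ) = c := by rw [Int.fract]; ring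
  have h2 : Int.fract c + 1 + (⌊c⌋ : ℝ) = c + 1 := by rw [Int.fract]; ring
  rw [h1, h2] at htrans
  rw [htrans]
  exact key _ (Int.fract_nonneg c) (Int.fract_lt_one c).le

lemma DK.measurable (hper : Function.Periodic φ 1)
    (hbv : eVariationOn φ (Set.Icc 0 1) ≠ ⊤) : Measurable φ := by
  classical
  have hproj : ∀ i : Fin d, LocallyBoundedVariationOn (fun t => φ t i) (Set.Icc (0:ℝ) 1) := by
    intro i
    have h : BoundedVariationOn ((EuclideanSpace.proj (𝕜 := ℝ) i) ∘ φ) (Set.Icc (0:ℝ) 1) :=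
      (EuclideanSpace.proj (𝕜 := ℝ) i).lipschitz.comp_boundedVariationOn hbv
    exact h.locallyBoundedVariationOn
  choose P Q hP hQ hPQ using fun i => (hproj i).exists_monotoneOn_sub_monotoneOn
  set cl : ℝ → ℝ := fun t => min 1 (max 0 t) with hcl
  have hclmem : ∀ t, cl t ∈ Set.Icc (0:ℝ) 1 := fun t =>
    ⟨le_min zero_le_one (le_max_left _ _), min_le_left _ _⟩
  have hclmono : Monotone cl := fun u v h =>
    min_le_min le_rfl (max_le_max le_rfl h)
  have hclid : ∀ t ∈ Set.Icc (0:ℝ) 1, cl t = t := by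
    intro t ht
    simp [hcl, max_eq_right ht.1, min_eq_right ht.2]
  have hg : Measurable (fun t => (fun i => P i (cl t) - Q i (cl t) : Fin d → ℝ)) := by
    apply measurable_pi_lambda
    intro i
    exact ((Monotone.measurable (fun u v h => hP i (hclmem u) (hclmem v) (hclmono h))).sub
      (Monotone.measurable (fun u v h => hQ i (hclmem u) (hclmem v) (hclmono h))))
  set G : ℝ → EuclideanSpace ℝ (Fin d) := fun t =>
    (PiLp.continuousLinearEquiv 2 ℝ (fun _ : Fin d => ℝ)).symm
      (fun i => P i (cl t) - Q i (cl t)) with hG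
  have hGmeas : Measurable G :=
    ((PiLp.continuousLinearEquiv 2 ℝ _).symm.continuous.measurable).comp hg
  have hGφ : ∀ t ∈ Set.Icc (0:ℝ) 1, G t = φ t := by
    intro t ht
    have hco : ∀ i, P i t - Q i t = φ t i := by
      intro i
      have := congrFun (hPQ i) t
      simp only [Pi.sub_apply] at this
      exact this.symm
    have : G t = fun i => φ t i := by
      funext i
      simp only [hG, hclid t ht]
      exact hco i
    exact congrArg (WithLp.toLp 2) this
  have hfinal : φ = fun t => G (Int.fract t) := by
    funext t
    have hmem : Int.fract t ∈ Set.Icc (0:ℝ) 1 :=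
      ⟨Int.fract_nonneg t, (Int.fract_lt_one t).le⟩
    have h1 : φ (Int.fract t) = φ t := by
      have h2 : Int.fract t + (⌊t⌋ : ℝ) = t := by rw [Int.fract]; ring
      calc φ (Int.fract t) = φ (Int.fract t + (⌊t⌋ : ℝ)) := (DK.phi_int hper _ ⌊t⌋).symm
      _ = φ t := by rw [h2]
    rw [hGφ _ hmem, h1]
  rw [hfinal]
  exact hGmeas.comp measurable_fract

lemma DK.norm_bound (hper : Function.Periodic φ 1)
    (hbv : eVariationOn φ (Set.Icc 0 1) ≠ ⊤) (t : ℝ) :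
    ‖φ t‖ ≤ ‖φ 0‖ + (eVariationOn φ (Set.Icc 0 1)).toReal := by
  have hmem : Int.fract t ∈ Set.Icc (0:ℝ) 1 :=
    ⟨Int.fract_nonneg t, (Int.fract_lt_one t).le⟩
  have h1 : φ (Int.fract t) = φ t := by
    have h2 : Int.fract t + (⌊t⌋ : ℝ) = t := by rw [Int.fract]; ring
    calc φ (Int.fract t) = φ (Int.fract t + (⌊t⌋ : ℝ)) := (DK.phi_int hper _ ⌊t⌋).symm
    _ = φ t := by rw [h2]
  have h3 : dist (φ (Int.fract t)) (φ 0) ≤ (eVariationOn φ (Set.Icc 0 1)).toReal := by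
    rw [dist_edist]
    exact ENNReal.toReal_mono hbv
      (eVariationOn.edist_le φ hmem ⟨le_rfl, zero_le_one⟩)
  have h4 := norm_sub_norm_le (φ (Int.fract t)) (φ 0)
  rw [← dist_eq_norm] at h4
  rw [← h1]
  linarith

lemma DK.intervalIntegrable (hper : Function.Periodic φ 1)
    (hbv : eVariationOn φ (Set.Icc 0 1) ≠ ⊤) (c e : ℝ) :
    IntervalIntegrable φ volume c e := by
  set C : ℝ := ‖φ 0‖ + (eVariationOn φ (Set.Icc 0 1)).toReal with hC
  apply IntervalIntegrable.mono_fun (f := fun _ : ℝ => C) intervalIntegrable_const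
    ((DK.measurable hper hbv).aestronglyMeasurable.restrict)
  filter_upwards with t
  show ‖φ t‖ ≤ ‖C‖
  calc ‖φ t‖ ≤ C := DK.norm_bound hper hbv t
  _ ≤ ‖C‖ := le_abs_self C

lemma DK.avg {q : ℕ} (hq0 : (0:ℝ) < (q:ℝ)) (c v : ℝ)
    (hv : v ∈ Set.Icc c (c + 1 / (q:ℝ)))
    (hfin : eVariationOn φ (Set.Icc c (c + 1 / (q:ℝ))) ≠ ⊤)
    (hint : IntervalIntegrable φ volume c (c + 1 / (q:ℝ))) :
    ‖φ v - (q:ℝ) • ∫ t in c..(c + 1 / (q:ℝ)), φ t‖ ≤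
      (eVariationOn φ (Set.Icc c (c + 1 / (q:ℝ)))).toReal := by
  set V := (eVariationOn φ (Set.Icc c (c + 1 / (q:ℝ)))).toReal with hV
  have hle : c ≤ c + 1 / (q:ℝ) := le_add_of_nonneg_right (by positivity)
  have hbound : ∀ t ∈ Set.uIoc c (c + 1 / (q:ℝ)), ‖φ v - φ t‖ ≤ V := by
    intro t ht
    rw [Set.uIoc_of_le hle] at ht
    have ht' : t ∈ Set.Icc c (c + 1 / (q:ℝ)) := ⟨ht.1.le, ht.2⟩
    have := eVariationOn.edist_le φ hv ht'
    rw [← dist_eq_norm, dist_edist]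
    exact ENNReal.toReal_mono hfin this
  have heq : φ v - (q:ℝ) • ∫ t in c..(c + 1 / (q:ℝ)), φ t
      = (q:ℝ) • ∫ t in c..(c + 1 / (q:ℝ)), (φ v - φ t) := by
    rw [intervalIntegral.integral_sub intervalIntegrable_const hint,
      intervalIntegral.integral_const]
    have h1 : c + 1 / (q:ℝ) - c = 1 / (q:ℝ) := by ring
    rw [h1, smul_sub, smul_smul]
    have h2 : (q:ℝ) * (1 / (q:ℝ)) = 1 := by field_simp
    rw [h2, one_smul]
  rw [heq, norm_smul]
  have h3 := intervalIntegral.norm_integral_le_of_norm_le_const (C := V)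
    (f := fun t => φ v - φ t) (a := c) (b := c + 1 / (q:ℝ)) hbound
  rw [show c + 1 / (q:ℝ) - c = 1 / (q:ℝ) from by ring,
    abs_of_pos (by positivity : (0:ℝ) < 1 / (q:ℝ))] at h3
  have hVnn : 0 ≤ V := ENNReal.toReal_nonneg
  calc ‖(q:ℝ)‖ * ‖∫ t in c..(c + 1 / (q:ℝ)), (φ v - φ t)‖
      ≤ ‖(q:ℝ)‖ * (V * (1 / (q:ℝ))) := by
        apply mul_le_mul_of_nonneg_left h3 (norm_nonneg _)
  _ = V := by
        rw [Real.norm_eq_abs, abs_of_nonneg hq0.le]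
        field_simp
  _ ≤ V := le_rfl

lemma DK.var_sum (φ : ℝ → EuclideanSpace ℝ (Fin d)) (a : ℕ → ℝ) (hm : Monotone a) (n : ℕ) :
    ∑ j ∈ Finset.range n, eVariationOn φ (Set.Icc (a j) (a (j + 1)))
      = eVariationOn φ (Set.Icc (a 0) (a n)) := by
  induction n with
  | zero =>
    simp only [Finset.range_zero, Finset.sum_empty]
    exact (eVariationOn.subsingleton φ (by simp [Set.Icc_self] : (Set.Icc (a 0) (a 0)).Subsingleton)).symm
  | succ n ih =>
    rw [Finset.sum_range_succ, ih]
    have := eVariationOn.Icc_add_Icc φ (s := (Set.univ : Set ℝ)) (hm (Nat.zero_le n))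
      (hm (Nat.le_succ n)) (Set.mem_univ _)
    simpa [Set.univ_inter] using this

lemma DK.reindex {M : Type*} [AddCommMonoid M] (q : ℕ) (hq : 0 < q) (p : ℤ)
    (hg : Int.gcd p q = 1) (f : ℕ → M) :
    ∑ k ∈ Finset.range q, f ((((k:ℤ) * p) % (q:ℤ)).toNat)
      = ∑ j ∈ Finset.range q, f j := by
  have hq' : (0:ℤ) < (q:ℤ) := by exact_mod_cast hq
  have h0 : ∀ k : ℕ, (0:ℤ) ≤ ((k:ℤ) * p) % (q:ℤ) := fun k => Int.emod_nonneg _ hq'.ne'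
  have hlt : ∀ k : ℕ, ((k:ℤ) * p) % (q:ℤ) < (q:ℤ) := fun k => Int.emod_lt_of_pos _ hq'
  set e : ℕ → ℕ := fun k => (((k:ℤ) * p) % (q:ℤ)).toNat with he
  have hmem : ∀ k ∈ Finset.range q, e k ∈ Finset.range q := by
    intro k _
    simp only [Finset.mem_range, he]
    have := h0 k; have := hlt k; omega
  have hinj : ∀ k₁ ∈ Finset.range q, ∀ k₂ ∈ Finset.range q, e k₁ = e k₂ → k₁ = k₂ := by
    intro k₁ h₁ k₂ h₂ h
    have heq : ((k₁:ℤ) * p) % (q:ℤ) = ((k₂:ℤ) * p) % (q:ℤ) := by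
      have := congrArg (fun n : ℕ => (n : ℤ)) h
      simpa only [he, Int.toNat_of_nonneg (h0 k₁), Int.toNat_of_nonneg (h0 k₂)] using this
    have hmod : (k₁:ℤ) ≡ (k₂:ℤ) [ZMOD (q:ℤ)] := by
      have h' : (k₁:ℤ) * p ≡ (k₂:ℤ) * p [ZMOD (q:ℤ)] := heq
      have hgq : Int.gcd (q:ℤ) p = 1 := by rwa [Int.gcd_comm]
      have := Int.ModEq.cancel_right_div_gcd hq' h'
      rwa [hgq, Nat.cast_one, Int.ediv_one] at this
    have hk₁ : (k₁:ℤ) % (q:ℤ) = (k₁:ℤ) :=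
      Int.emod_eq_of_lt (Int.natCast_nonneg k₁) (by exact_mod_cast Finset.mem_range.mp h₁)
    have hk₂ : (k₂:ℤ) % (q:ℤ) = (k₂:ℤ) :=
      Int.emod_eq_of_lt (Int.natCast_nonneg k₂) (by exact_mod_cast Finset.mem_range.mp h₂)
    have : (k₁:ℤ) = (k₂:ℤ) := by
      have h5 : (k₁:ℤ) % (q:ℤ) = (k₂:ℤ) % (q:ℤ) := hmod
      rw [hk₁, hk₂] at h5; exact h5
    exact_mod_cast this
  have hsurj := Finset.surj_on_of_inj_on_of_card_le (s := Finset.range q) (t := Finset.range q)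
    (fun k _ => e k) (fun k hk => hmem k hk) (fun k₁ k₂ h₁ h₂ hh => hinj k₁ h₁ k₂ h₂ hh) le_rfl
  exact Finset.sum_bij (fun k _ => e k) hmem (fun k₁ h₁ k₂ h₂ hh => hinj k₁ h₁ k₂ h₂ hh)
    (fun b hb => by obtain ⟨a, ha, hab⟩ := hsurj b hb; exact ⟨a, ha, hab.symm⟩)
    (fun k _ => rfl)

end DK

/-- Denjoy–Koksma inequality: if `φ : 𝕋 → ℝ^d` (realized as a `1`-periodic function on `ℝ`)
has bounded variation and zero mean, `α` is irrational, and `q ≥ 1` satisfies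
`|α - p/q| < 1/q²` with `gcd(p,q)=1`, then `‖Σ_{k<q} φ(x + kα)‖ ≤ Var_𝕋(φ)` for all `x`. -/

theorem stmt3 (d : ℕ) (α : ℝ) (hirr : Irrational α)
    (φ : ℝ → EuclideanSpace ℝ (Fin d)) (hper : Function.Periodic φ 1)
    (hbv : eVariationOn φ (Set.Icc 0 1) ≠ ⊤)
    (hmean : ∫ x in (0 : ℝ)..1, φ x = 0)
    (q : ℕ) (hq : 0 < q) (p : ℤ) (hcop : IsCoprime p (q : ℤ))
    (happ : |α - (p : ℝ) / (q : ℝ)| < 1 / (q : ℝ) ^ 2) :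
    ∀ x : ℝ, ‖∑ k ∈ Finset.range q, φ (x + (k : ℝ) * α)‖ ≤
      (eVariationOn φ (Set.Icc 0 1)).toReal := by
  intro x
  have hgcd : Int.gcd p (q : ℤ) = 1 := Int.isCoprime_iff_gcd_eq_one.mp hcop
  have hq0 : (0:ℝ) < (q:ℝ) := by exact_mod_cast hq
  have hq1 : (1:ℝ) ≤ (q:ℝ) := by exact_mod_cast hq
  set β : ℝ := α - (p:ℝ) / (q:ℝ) with hβdef
  have hβ : |β| < 1 / (q:ℝ)^2 := happ
  set x' : ℝ := if 0 ≤ β then x else x - 1/(q:ℝ) with hx'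
  set a : ℕ → ℝ := fun j => x' + (j:ℝ)/(q:ℝ) with ha
  have hamono : Monotone a := by
    apply monotone_nat_of_le_succ
    intro j
    simp only [ha]
    have hc : ((j:ℕ):ℝ) ≤ ((j+1:ℕ):ℝ) := by exact_mod_cast Nat.le_succ j
    exact add_le_add_right ((div_le_div_iff_of_pos_right hq0).mpr hc) x'
  have ha0 : a 0 = x' := by simp [ha]
  have haq : a q = x' + 1 := by
    simp only [ha]
    rw [div_self hq0.ne']
  have hastep : ∀ j : ℕ, a (j+1) = a j + 1/(q:ℝ) := by
    intro j
    simp only [ha]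
    push_cast
    ring
  -- the point associated to k
  set r : ℕ → ℕ := fun k => (((k:ℤ) * p) % (q:ℤ)).toNat with hrdef
  set v : ℕ → ℝ := fun k => x + ((r k : ℕ):ℝ)/(q:ℝ) + (k:ℝ)*β with hv
  have hq'ℤ : (0:ℤ) < (q:ℤ) := by exact_mod_cast hq
  have hr0 : ∀ k : ℕ, (0:ℤ) ≤ ((k:ℤ) * p) % (q:ℤ) := fun k => Int.emod_nonneg _ hq'ℤ.ne'
  have hrlt : ∀ k : ℕ, r k < q := by
    intro k
    have := Int.emod_lt_of_pos ((k:ℤ) * p) hq'ℤ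
    have := hr0 k
    simp only [hrdef]
    omega
  clear_value v r a x' β
  -- step 1 : rewrite the Birkhoff sum using periodicity
  have hveq : ∀ k ∈ Finset.range q, φ (x + (k:ℝ) * α) = φ (v k) := by
    intro k _
    have hdiv : (q:ℤ) * (((k:ℤ)*p)/(q:ℤ)) + ((k:ℤ)*p) % (q:ℤ) = (k:ℤ)*p :=
      Int.mul_ediv_add_emod _ _
    have hrcast : ((r k : ℕ):ℝ) = ((((k:ℤ)*p) % (q:ℤ) : ℤ):ℝ) := by
      simp only [hrdef]
      exact_mod_cast congrArg (Int.cast : ℤ → ℝ) (Int.toNat_of_nonneg (hr0 k))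
    have hkp : (k:ℝ)*(p:ℝ) = (q:ℝ) * (((((k:ℤ)*p)/(q:ℤ)) : ℤ):ℝ) + ((((k:ℤ)*p) % (q:ℤ) : ℤ):ℝ) := by
      exact_mod_cast congrArg (Int.cast : ℤ → ℝ) hdiv.symm
    have hcast : v k + ((((k:ℤ)*p)/(q:ℤ) : ℤ):ℝ) = x + (k:ℝ) * α := by
      simp only [hv, hβdef, hrcast]
      field_simp
      linarith [hkp]
    calc φ (x + (k:ℝ) * α) = φ (v k + ((((k:ℤ)*p)/(q:ℤ) : ℤ):ℝ)) := by rw [hcast]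
    _ = φ (v k) := by simpa using (hper.int_mul (((k:ℤ)*p)/(q:ℤ))) (v k)
  -- step 2 : each v k lies in the interval [a (r k), a (r k + 1)]
  have hmem : ∀ k ∈ Finset.range q, v k ∈ Set.Icc (a (r k)) (a (r k) + 1/(q:ℝ)) := by
    intro k hk
    have hkq : (k:ℝ) ≤ (q:ℝ) - 1 := by
      have : (k:ℕ) + 1 ≤ q := Finset.mem_range.mp hk
      have : ((k:ℕ):ℝ) + 1 ≤ (q:ℝ) := by exact_mod_cast this
      linarith
    have hknn : (0:ℝ) ≤ (k:ℝ) := Nat.cast_nonneg k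
    have hkβ : |(k:ℝ)*β| ≤ ((q:ℝ)-1)/(q:ℝ)^2 := by
      rw [abs_mul, abs_of_nonneg hknn]
      calc (k:ℝ)*|β| ≤ ((q:ℝ)-1)*|β| := mul_le_mul_of_nonneg_right hkq (abs_nonneg β)
      _ ≤ ((q:ℝ)-1)*(1/(q:ℝ)^2) := mul_le_mul_of_nonneg_left hβ.le (by linarith)
      _ = ((q:ℝ)-1)/(q:ℝ)^2 := by ring
    have hstep : ((q:ℝ)-1)/(q:ℝ)^2 ≤ 1/(q:ℝ) := by
      rw [div_le_div_iff₀ (by positivity) hq0]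
      nlinarith
    have habs := abs_le.mp (hkβ.trans hstep)
    simp only [hv, ha, Set.mem_Icc]
    by_cases h : 0 ≤ β
    · have h1 : (0:ℝ) ≤ (k:ℝ)*β := mul_nonneg hknn h
      rw [hx']
      simp only [if_pos h]
      constructor <;> linarith [habs.2]
    · have h1 : (k:ℝ)*β ≤ 0 := mul_nonpos_of_nonneg_of_nonpos hknn (le_of_not_ge h)
      rw [hx']
      simp only [if_neg h]
      constructor <;> linarith [habs.1]
  -- variation facts
  have hvarunit : eVariationOn φ (Set.Icc x' (x'+1)) = eVariationOn φ (Set.Icc 0 1) :=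
    DK.var_unit hper x'
  have hvfin : eVariationOn φ (Set.Icc x' (x'+1)) ≠ ⊤ := by rw [hvarunit]; exact hbv
  have hsub : ∀ j, j < q → Set.Icc (a j) (a (j+1)) ⊆ Set.Icc x' (x'+1) := by
    intro j hj
    apply Set.Icc_subset_Icc
    · rw [← ha0]; exact hamono (Nat.zero_le j)
    · rw [← haq]; exact hamono (by omega)
  have hpiecefin : ∀ j, j < q → eVariationOn φ (Set.Icc (a j) (a (j+1))) ≠ ⊤ := by
    intro j hj
    exact ne_top_of_le_ne_top hvfin (eVariationOn.mono φ (hsub j hj))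
  have hint : ∀ c e : ℝ, IntervalIntegrable φ volume c e := DK.intervalIntegrable hper hbv
  -- the total integral vanishes
  have hIzero : ∑ j ∈ Finset.range q, (∫ t in a j..a (j+1), φ t) = 0 := by
    rw [intervalIntegral.sum_integral_adjacent_intervals (fun k _ => hint _ _)]
    rw [ha0, haq]
    rw [hper.intervalIntegral_add_eq x' 0]
    simpa using hmean
  -- main chain
  have hrw : ∑ k ∈ Finset.range q, φ (x + (k:ℝ) * α)
      = ∑ k ∈ Finset.range q,
        (φ (v k) - (q:ℝ) • ∫ t in a (r k)..(a (r k) + 1/(q:ℝ)), φ t) := by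
    rw [Finset.sum_sub_distrib]
    have hz : ∑ k ∈ Finset.range q, ((q:ℝ) • ∫ t in a (r k)..(a (r k) + 1/(q:ℝ)), φ t) = 0 := by
      rw [← Finset.smul_sum]
      have hre : ∑ k ∈ Finset.range q, (∫ t in a (r k)..(a (r k) + 1/(q:ℝ)), φ t)
          = ∑ j ∈ Finset.range q, (∫ t in a j..(a j + 1/(q:ℝ)), φ t) := by
        simp only [hrdef]
        exact DK.reindex q hq p hgcd (fun j => ∫ t in a j..(a j + 1/(q:ℝ)), φ t)
      rw [hre]
      have : ∀ j ∈ Finset.range q, (∫ t in a j..(a j + 1/(q:ℝ)), φ t)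
          = ∫ t in a j..a (j+1), φ t := by
        intro j _
        rw [hastep j]
      rw [Finset.sum_congr rfl this, hIzero, smul_zero]
    rw [hz, sub_zero]
    exact Finset.sum_congr rfl hveq
  rw [hrw]
  calc ‖∑ k ∈ Finset.range q,
        (φ (v k) - (q:ℝ) • ∫ t in a (r k)..(a (r k) + 1/(q:ℝ)), φ t)‖
      ≤ ∑ k ∈ Finset.range q,
        ‖φ (v k) - (q:ℝ) • ∫ t in a (r k)..(a (r k) + 1/(q:ℝ)), φ t‖ :=
        norm_sum_le _ _
  _ ≤ ∑ k ∈ Finset.range q,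
        (eVariationOn φ (Set.Icc (a (r k)) (a (r k) + 1/(q:ℝ)))).toReal := by
      apply Finset.sum_le_sum
      intro k hk
      have hfin' : eVariationOn φ (Set.Icc (a (r k)) (a (r k) + 1/(q:ℝ))) ≠ ⊤ := by
        rw [← hastep (r k)]
        exact hpiecefin (r k) (hrlt k)
      exact DK.avg hq0 (a (r k)) (v k) (hmem k hk) hfin' (hint _ _)
  _ = ∑ j ∈ Finset.range q,
        (eVariationOn φ (Set.Icc (a j) (a j + 1/(q:ℝ)))).toReal := by
      simp only [hrdef]
      exact DK.reindex q hq p hgcd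
        (fun j => (eVariationOn φ (Set.Icc (a j) (a j + 1/(q:ℝ)))).toReal)
  _ ≤ (eVariationOn φ (Set.Icc 0 1)).toReal := by
      have hcongr : ∀ j ∈ Finset.range q,
          (eVariationOn φ (Set.Icc (a j) (a j + 1/(q:ℝ)))).toReal
            = (eVariationOn φ (Set.Icc (a j) (a (j+1)))).toReal := by
        intro j _
        rw [hastep j]
      rw [Finset.sum_congr rfl hcongr,
        ← ENNReal.toReal_sum (fun j hj => hpiecefin j (Finset.mem_range.mp hj)),
        DK.var_sum φ a hamono q, ha0, haq, hvarunit]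
end

section
/- Let α be irrational with principal denominators (q_n) and suppose Q is prime and q_n is not divisible by Q for all n ≥ N. Then for all n > N and all integers j with 0 < j < q_n, one has ‖jQα‖ ≥ 1/(2Q q_n), where ‖x‖ denotes the distance from x to the nearest integer. -/
/-- The Gauss map `G(x) = {1/x}`. -/
noncomputable def gaussMap (x : ℝ) : ℝ := Int.fract x⁻¹

/-- The partial quotients of the regular continued fraction expansion. -/
noncomputable def cfA (α : ℝ) (n : ℕ) : ℤ := ⌊(gaussMap^[n - 1] α)⁻¹⌋

/-- The principal denominators: `q_0 = 1, q_1 = a_1, q_{n+1} = a_{n+1} q_n + q_{n-1}`. -/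
noncomputable def cfQ (α : ℝ) : ℕ → ℤ
  | 0 => 1
  | 1 => cfA α 1
  | (n + 2) => cfA α (n + 2) * cfQ α (n + 1) + cfQ α n

/-- `‖x‖`, the distance from `x` to the nearest integer. -/
noncomputable def nint (x : ℝ) : ℝ := |x - round x|

namespace CFAux

/-- numerators -/
noncomputable def cfP (α : ℝ) : ℕ → ℤ
  | 0 => 0
  | 1 => 1
  | (n + 2) => cfA α (n + 2) * cfP α (n + 1) + cfP α n

lemma mem_gauss {β : ℝ} (h1 : Irrational β) (h2 : β ∈ Set.Ioo (0:ℝ) 1) :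
    Irrational (gaussMap β) ∧ gaussMap β ∈ Set.Ioo (0:ℝ) 1 := by
  have hfr : Irrational (gaussMap β) := by
    have : Irrational (β⁻¹ - ⌊β⁻¹⌋) := h1.inv.sub_intCast _
    unfold gaussMap Int.fract
    exact this
  refine ⟨hfr, ?_, Int.fract_lt_one _⟩
  rcases (Int.fract_nonneg (β⁻¹)).lt_or_eq with h | h
  · exact h
  · exact absurd (hfr.ne_int 0) (by simp [gaussMap, ← h])

lemma mem_iter {β : ℝ} (h1 : Irrational β) (h2 : β ∈ Set.Ioo (0:ℝ) 1) :
    ∀ k, Irrational (gaussMap^[k] β) ∧ gaussMap^[k] β ∈ Set.Ioo (0:ℝ) 1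
  | 0 => ⟨h1, h2⟩
  | (k+1) => by
      rw [Function.iterate_succ_apply']
      exact mem_gauss (mem_iter h1 h2 k).1 (mem_iter h1 h2 k).2

lemma inv_eq (β : ℝ) (k : ℕ) :
    (gaussMap^[k] β)⁻¹ = (cfA β (k+1) : ℝ) + gaussMap^[k+1] β := by
  rw [Function.iterate_succ_apply']
  have h0 : gaussMap (gaussMap^[k] β) = (gaussMap^[k] β)⁻¹ - ⌊(gaussMap^[k] β)⁻¹⌋ := rfl
  have h2 : cfA β (k+1) = ⌊(gaussMap^[k] β)⁻¹⌋ := by simp [cfA]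
  rw [h0, h2]; ring

lemma one_le_cfA {β : ℝ} (h1 : Irrational β) (h2 : β ∈ Set.Ioo (0:ℝ) 1) (k : ℕ) :
    1 ≤ cfA β (k+1) := by
  obtain ⟨-, hx0, hx1⟩ := mem_iter h1 h2 k
  have : (1:ℝ) < (gaussMap^[k] β)⁻¹ := (one_lt_inv₀ hx0).mpr hx1
  have : (1:ℤ) ≤ ⌊(gaussMap^[k] β)⁻¹⌋ := by
    exact_mod_cast Int.le_floor.mpr (by exact_mod_cast this.le)
  simpa [cfA] using this

lemma one_le_cfQ {β : ℝ} (h1 : Irrational β) (h2 : β ∈ Set.Ioo (0:ℝ) 1) :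
    ∀ n, 1 ≤ cfQ β n
  | 0 => le_refl _
  | 1 => one_le_cfA h1 h2 0
  | (n+2) => by
      have ha := one_le_cfA h1 h2 (n+1)
      have h1' := one_le_cfQ h1 h2 (n+1)
      have h0' := one_le_cfQ h1 h2 n
      show 1 ≤ cfA β (n+2) * cfQ β (n+1) + cfQ β n
      nlinarith

lemma cfQ_mono {β : ℝ} (h1 : Irrational β) (h2 : β ∈ Set.Ioo (0:ℝ) 1) :
    Monotone (cfQ β) := by
  apply monotone_nat_of_le_succ
  intro n
  match n with
  | 0 => exact one_le_cfA h1 h2 0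
  | (m+1) =>
      have ha := one_le_cfA h1 h2 (m+1)
      have h1' := one_le_cfQ h1 h2 (m+1)
      have h0' := one_le_cfQ h1 h2 m
      show cfQ β (m+1) ≤ cfA β (m+2) * cfQ β (m+1) + cfQ β m
      nlinarith

lemma one_le_cfP {β : ℝ} (h1 : Irrational β) (h2 : β ∈ Set.Ioo (0:ℝ) 1) :
    ∀ n, 1 ≤ cfP β (n+1)
  | 0 => le_refl _
  | 1 => by
      have ha := one_le_cfA h1 h2 1
      show 1 ≤ cfA β (1+1) * 1 + 0
      omega
  | (n+2) => by
      have ha := one_le_cfA h1 h2 (n+2)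
      have h1' := one_le_cfP h1 h2 (n+1)
      have h0' := one_le_cfP h1 h2 n
      show 1 ≤ cfA β (n+3) * cfP β (n+2) + cfP β (n+1)
      nlinarith

lemma cfA_shift (β : ℝ) (k : ℕ) : cfA (gaussMap β) (k+1) = cfA β (k+2) := by
  simp only [cfA, Nat.add_sub_cancel]
  rw [← Function.iterate_succ_apply]
  rfl

lemma cfP_shift (β : ℝ) : ∀ n, cfP β (n+1) = cfQ (gaussMap β) n
  | 0 => rfl
  | 1 => by
      show cfA β 2 * cfP β 1 + cfP β 0 = cfA (gaussMap β) 1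
      rw [cfA_shift β 0]; simp [cfP]
  | (n+2) => by
      show cfA β (n+3) * cfP β (n+2) + cfP β (n+1)
         = cfA (gaussMap β) (n+2) * cfQ (gaussMap β) (n+1) + cfQ (gaussMap β) n
      rw [cfA_shift β (n+1), cfP_shift β (n+1), cfP_shift β n]

lemma cfQ_shift (β : ℝ) :
    ∀ n, cfQ β (n+1) = cfA β 1 * cfQ (gaussMap β) n + cfP (gaussMap β) n
  | 0 => by simp [cfQ, cfP]
  | 1 => by
      show cfA β 2 * cfQ β 1 + cfQ β 0
         = cfA β 1 * cfQ (gaussMap β) 1 + cfP (gaussMap β) 1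
      rw [← cfA_shift β 0]
      show cfA (gaussMap β) 1 * cfA β 1 + 1 = cfA β 1 * cfA (gaussMap β) 1 + 1
      ring
  | (n+2) => by
      show cfA β (n+3) * cfQ β (n+2) + cfQ β (n+1)
         = cfA β 1 * (cfA (gaussMap β) (n+2) * cfQ (gaussMap β) (n+1) + cfQ (gaussMap β) n)
           + (cfA (gaussMap β) (n+2) * cfP (gaussMap β) (n+1) + cfP (gaussMap β) n)
      rw [cfQ_shift β (n+1), cfQ_shift β n, ← cfA_shift β (n+1)]
      ring

lemma det (β : ℝ) : ∀ n, cfQ β n * cfP β (n+1) - cfQ β (n+1) * cfP β n = (-1)^n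
  | 0 => by simp [cfQ, cfP]
  | (n+1) => by
      have ih := det β n
      show cfQ β (n+1) * (cfA β (n+2) * cfP β (n+1) + cfP β n)
         - (cfA β (n+2) * cfQ β (n+1) + cfQ β n) * cfP β (n+1) = (-1)^(n+1)
      rw [pow_succ]
      linear_combination (-1 : ℤ) * ih


lemma convergent_inv : ∀ (m : ℕ) (β : ℝ), Irrational β → β ∈ Set.Ioo (0:ℝ) 1 →
    Real.convergent β⁻¹ m = (cfQ β (m+1) : ℚ) / (cfP β (m+1)) := by
  intro m
  induction m with
  | zero =>
      intro β h1 h2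
      rw [Real.convergent_zero]
      have hA : cfA β 1 = ⌊β⁻¹⌋ := by simp [cfA]
      show ((⌊β⁻¹⌋ : ℤ) : ℚ) = (cfQ β 1 : ℚ) / (cfP β 1 : ℚ)
      rw [show cfQ β 1 = cfA β 1 from rfl, show cfP β 1 = 1 from rfl, hA]
      simp
  | succ m ih =>
      intro β h1 h2
      obtain ⟨hg1, hg2⟩ := mem_gauss h1 h2
      rw [Real.convergent_succ]
      have hfr : Int.fract (β⁻¹) = gaussMap β := rfl
      rw [hfr, ih _ hg1 hg2]
      have hA : cfA β 1 = ⌊β⁻¹⌋ := by simp [cfA]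
      rw [← hA]
      have hQpos : (0:ℚ) < (cfQ (gaussMap β) (m+1) : ℚ) := by
        exact_mod_cast lt_of_lt_of_le zero_lt_one (one_le_cfQ hg1 hg2 (m+1))
      have hPpos : (0:ℚ) < (cfP (gaussMap β) (m+1) : ℚ) := by
        exact_mod_cast lt_of_lt_of_le zero_lt_one (one_le_cfP hg1 hg2 m)
      rw [show cfP β (m+1+1) = cfQ (gaussMap β) (m+1) from cfP_shift β (m+1),
          show cfQ β (m+1+1) = cfA β 1 * cfQ (gaussMap β) (m+1) + cfP (gaussMap β) (m+1)
            from cfQ_shift β (m+1)]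
      rw [inv_div]
      push_cast
      field_simp

lemma convergent_eq {β : ℝ} (h1 : Irrational β) (h2 : β ∈ Set.Ioo (0:ℝ) 1) (n : ℕ) :
    Real.convergent β n = (cfP β n : ℚ) / (cfQ β n : ℚ) := by
  match n with
  | 0 =>
      rw [Real.convergent_zero]
      rw [Int.floor_eq_zero_iff.mpr ⟨h2.1.le, h2.2⟩]
      simp [cfP, cfQ]
  | (n+1) =>
      rw [Real.convergent_succ]
      rw [Int.floor_eq_zero_iff.mpr ⟨h2.1.le, h2.2⟩]
      rw [Int.fract_eq_self.mpr ⟨h2.1.le, h2.2⟩]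
      rw [convergent_inv n β h1 h2]
      rw [inv_div]
      simp

lemma D_eq {α : ℝ} (h1 : Irrational α) (h2 : α ∈ Set.Ioo (0:ℝ) 1) :
    ∀ n, (cfQ α n : ℝ) * α - (cfP α n : ℝ)
        = (-1)^n * ∏ i ∈ Finset.range (n+1), gaussMap^[i] α
  | 0 => by simp [cfQ, cfP, Finset.prod_range_one]
  | 1 => by
      have hα0 : α ≠ 0 := ne_of_gt h2.1
      have key : α * ((cfA α 1 : ℝ) + gaussMap^[1] α) = 1 := by
        have := inv_eq α 0
        rw [Function.iterate_zero_apply] at this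
        rw [← this]
        exact mul_inv_cancel₀ hα0
      show (cfA α 1 : ℝ) * α - ((1:ℤ) : ℝ) = _
      rw [Finset.prod_range_succ, Finset.prod_range_one, Function.iterate_zero_apply]
      push_cast
      linear_combination key
  | (n+2) => by
      have ih1 := D_eq h1 h2 (n+1)
      have ih0 := D_eq h1 h2 n
      have hx := (mem_iter h1 h2 (n+1)).2.1
      have key : gaussMap^[n+1] α * ((cfA α (n+2) : ℝ) + gaussMap^[n+2] α) = 1 := by
        rw [← inv_eq α (n+1)]
        exact mul_inv_cancel₀ (ne_of_gt hx)
      show ((cfA α (n+2) * cfQ α (n+1) + cfQ α n : ℤ) : ℝ) * α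
          - ((cfA α (n+2) * cfP α (n+1) + cfP α n : ℤ) : ℝ) = _
      push_cast
      rw [Finset.prod_range_succ, Finset.prod_range_succ]
      rw [Finset.prod_range_succ] at ih1
      rw [pow_succ, pow_succ]
      linear_combination (cfA α (n+2) : ℝ) * ih1 + ih0
        - ((-1:ℝ)^n * ∏ i ∈ Finset.range (n+1), gaussMap^[i] α) * key

lemma prod_pos {α : ℝ} (h1 : Irrational α) (h2 : α ∈ Set.Ioo (0:ℝ) 1) (n : ℕ) :
    0 < ∏ i ∈ Finset.range (n+1), gaussMap^[i] α :=
  Finset.prod_pos fun i _ => (mem_iter h1 h2 i).2.1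

lemma prod_succ_le {α : ℝ} (h1 : Irrational α) (h2 : α ∈ Set.Ioo (0:ℝ) 1) (n : ℕ) :
    ∏ i ∈ Finset.range (n+2), gaussMap^[i] α ≤ ∏ i ∈ Finset.range (n+1), gaussMap^[i] α := by
  rw [Finset.prod_range_succ]
  have hp := prod_pos h1 h2 n
  have hxle := (mem_iter h1 h2 (n+1)).2.2.le
  nlinarith

lemma sum_eq_one {α : ℝ} (h1 : Irrational α) (h2 : α ∈ Set.Ioo (0:ℝ) 1) (n : ℕ) :
    (cfQ α (n+1) : ℝ) * (∏ i ∈ Finset.range (n+1), gaussMap^[i] α)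
      + (cfQ α n : ℝ) * (∏ i ∈ Finset.range (n+2), gaussMap^[i] α) = 1 := by
  have d0 := D_eq h1 h2 n
  have d1 := D_eq h1 h2 (n+1)
  have dtR : (cfQ α n : ℝ) * (cfP α (n+1) : ℝ) - (cfQ α (n+1) : ℝ) * (cfP α n : ℝ)
      = (-1)^n := by exact_mod_cast det α n
  rcases Nat.even_or_odd n with he | ho
  · rw [he.neg_one_pow] at dtR d0
    rw [(he.add_one).neg_one_pow] at d1
    linear_combination (-(cfQ α (n+1) : ℝ)) * d0 + (cfQ α n : ℝ) * d1 + dtR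
  · rw [ho.neg_one_pow] at dtR d0
    rw [(ho.add_one).neg_one_pow] at d1
    linear_combination (cfQ α (n+1) : ℝ) * d0 - (cfQ α n : ℝ) * d1 - dtR

lemma prod_ge {α : ℝ} (h1 : Irrational α) (h2 : α ∈ Set.Ioo (0:ℝ) 1) (n : ℕ) :
    1 / (2 * (cfQ α (n+1) : ℝ)) ≤ ∏ i ∈ Finset.range (n+1), gaussMap^[i] α := by
  have hid := sum_eq_one h1 h2 n
  have hq1 : (1:ℝ) ≤ (cfQ α (n+1) : ℝ) := by exact_mod_cast one_le_cfQ h1 h2 (n+1)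
  have hmono : (cfQ α n : ℝ) ≤ (cfQ α (n+1) : ℝ) := by
    exact_mod_cast cfQ_mono h1 h2 (Nat.le_succ n)
  have hPle := prod_succ_le h1 h2 n
  have hPpos := prod_pos h1 h2 n
  have hP1pos := prod_pos h1 h2 (n+1)
  have hq0 : (0:ℝ) < (cfQ α n : ℝ) := by
    exact_mod_cast lt_of_lt_of_le zero_lt_one (one_le_cfQ h1 h2 n)
  have hle : (cfQ α n : ℝ) * (∏ i ∈ Finset.range (n+2), gaussMap^[i] α)
      ≤ (cfQ α (n+1) : ℝ) * (∏ i ∈ Finset.range (n+1), gaussMap^[i] α) :=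
    mul_le_mul hmono hPle hP1pos.le (by linarith)
  rw [div_le_iff₀ (by linarith)]
  nlinarith

lemma coprime (β : ℝ) : ∀ n, IsCoprime (cfP β n) (cfQ β n)
  | 0 => by
      rw [show cfP β 0 = 0 from rfl, show cfQ β 0 = 1 from rfl]
      exact isCoprime_zero_left.mpr isUnit_one
  | (n+1) => by
      have hd := det β n
      rcases Nat.even_or_odd n with he | ho
      · rw [he.neg_one_pow] at hd
        exact ⟨cfQ β n, -(cfP β n), by linear_combination hd⟩
      · rw [ho.neg_one_pow] at hd
        exact ⟨-(cfQ β n), cfP β n, by linear_combination -hd⟩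

lemma num_den {a b : ℤ} (hb : 0 < b) (h : IsCoprime a b) :
    ((a:ℚ)/b).num = a ∧ (((a:ℚ)/b).den : ℤ) = b := by
  have hgcd : Int.gcd a b = 1 := Int.isCoprime_iff_gcd_eq_one.mp h
  have hbna : (b.natAbs : ℤ) = b := Int.natAbs_of_nonneg hb.le
  have hne : b.natAbs ≠ 0 := Int.natAbs_ne_zero.mpr hb.ne'
  have hq : ((a:ℚ)/b) = Rat.mk' a b.natAbs hne hgcd := by
    have hmk := @Rat.mk_eq_divInt a b.natAbs hne hgcd
    rw [hmk, Rat.divInt_eq_div, hbna]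
  constructor
  · rw [hq]
  · rw [hq]; exact hbna

end CFAux

/-- If `Q` is prime and `Q ∤ q_n` for all `n ≥ N`, then for all `n > N` and all integers
`0 < j < q_n`, one has `‖jQα‖ ≥ 1/(2Q q_n)`. -/
theorem stmt7 (α : ℝ) (hα : α ∈ Set.Ioo (0 : ℝ) 1) (hirr : Irrational α)
    (Q : ℕ) (hQ : Nat.Prime Q) (N : ℕ)
    (hdiv : ∀ n : ℕ, N ≤ n → ¬ ((Q : ℤ) ∣ cfQ α n)) :
    ∀ n : ℕ, N < n → ∀ j : ℤ, 0 < j → j < cfQ α n →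
      1 / (2 * (Q : ℝ) * (cfQ α n : ℝ)) ≤ nint ((j : ℝ) * (Q : ℝ) * α) := by
  intro n hn j hj0 hjq
  by_contra hcon
  push_neg at hcon
  have hQ2 : (2:ℤ) ≤ Q := by exact_mod_cast hQ.two_le
  have hqn1 : (1:ℤ) ≤ cfQ α n := CFAux.one_le_cfQ hirr hα n
  set m : ℤ := j * Q with hm
  have hm_pos : 0 < m := mul_pos hj0 (by exact_mod_cast hQ.pos)
  have hmlt : m < cfQ α n * Q := by
    apply mul_lt_mul_of_pos_right hjq
    exact_mod_cast hQ.pos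
  set u' : ℤ := round ((m:ℝ) * α) with hu'
  have hmR : (m:ℝ) = (j:ℝ) * (Q:ℝ) := by push_cast [hm]; ring
  have hnint : nint ((j:ℝ) * (Q:ℝ) * α) = |(m:ℝ) * α - (u':ℝ)| := by
    rw [nint, hu', hmR]
  rw [hnint] at hcon
  -- the rational approximation
  set ρ : ℚ := (u' : ℚ) / (m : ℚ) with hρ
  have hdvd : (ρ.den : ℤ) ∣ m := by
    rw [hρ, ← Rat.divInt_eq_div]
    exact Rat.den_dvd u' m
  have hden_pos : (0:ℤ) < (ρ.den : ℤ) := by exact_mod_cast ρ.pos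
  have hden_le : (ρ.den : ℤ) ≤ m := Int.le_of_dvd hm_pos hdvd
  have hmR_pos : (0:ℝ) < (m:ℝ) := by exact_mod_cast hm_pos
  have hρR : (ρ : ℝ) = (u' : ℝ) / (m : ℝ) := by push_cast [hρ]; ring
  have habs : |α - (ρ:ℝ)| = |(m:ℝ) * α - (u':ℝ)| / (m:ℝ) := by
    rw [hρR, show α - (u':ℝ)/(m:ℝ) = ((m:ℝ) * α - (u':ℝ)) / (m:ℝ) from by field_simp,
      abs_div, abs_of_pos hmR_pos]
  have hqnR : (1:ℝ) ≤ (cfQ α n : ℝ) := by exact_mod_cast hqn1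
  have hQR : (2:ℝ) ≤ (Q:ℝ) := by exact_mod_cast hQ2
  have hmltR : (m:ℝ) < (cfQ α n : ℝ) * (Q:ℝ) := by exact_mod_cast hmlt
  have hdenR : (1:ℝ) ≤ (ρ.den : ℝ) := by exact_mod_cast hden_pos
  have hdenleR : (ρ.den : ℝ) ≤ (m:ℝ) := by exact_mod_cast hden_le
  have hlegendre : |α - (ρ:ℝ)| < 1 / (2 * (ρ.den : ℝ)^2) := by
    rw [habs]
    have h1 : |(m:ℝ) * α - (u':ℝ)| / (m:ℝ) < (1 / (2 * (Q:ℝ) * (cfQ α n : ℝ))) / (m:ℝ) := by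
      gcongr
    refine h1.trans_le ?_
    rw [div_div, div_le_div_iff₀ (by positivity) (by positivity), one_mul, one_mul]
    nlinarith
  obtain ⟨r, hr⟩ := Real.exists_rat_eq_convergent hlegendre
  have hconv := CFAux.convergent_eq hirr hα r
  have hqr1 : (1:ℤ) ≤ cfQ α r := CFAux.one_le_cfQ hirr hα r
  obtain ⟨hnum, hden⟩ := CFAux.num_den (lt_of_lt_of_le zero_lt_one hqr1) (CFAux.coprime α r)
  have hρeq : ρ = (CFAux.cfP α r : ℚ) / (cfQ α r : ℚ) := hr.trans hconv
  have hρden : (ρ.den : ℤ) = cfQ α r := by rw [hρeq]; exact hden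
  have hqrdvd : cfQ α r ∣ m := hρden ▸ hdvd
  have hqr_le_m : cfQ α r ≤ m := Int.le_of_dvd hm_pos hqrdvd
  have hcross : u' * cfQ α r = CFAux.cfP α r * m := by
    have h0 : (u' : ℚ) / (m : ℚ) = ((CFAux.cfP α r : ℤ) : ℚ) / ((cfQ α r : ℤ) : ℚ) := by
      rw [← hρ]; exact hρeq
    have hm0 : (m:ℚ) ≠ 0 := by exact_mod_cast hm_pos.ne'
    have hq0 : ((cfQ α r : ℤ):ℚ) ≠ 0 := by
      exact_mod_cast (lt_of_lt_of_le zero_lt_one hqr1).ne'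
    rw [div_eq_div_iff hm0 hq0] at h0
    exact_mod_cast h0
  have hqrR : (1:ℝ) ≤ (cfQ α r : ℝ) := by exact_mod_cast hqr1
  have hcR : (u':ℝ) * (cfQ α r:ℝ) = (CFAux.cfP α r:ℝ) * (m:ℝ) := by exact_mod_cast hcross
  have hid : (cfQ α r : ℝ) * ((m:ℝ)*α - (u':ℝ))
      = (m:ℝ) * ((cfQ α r : ℝ)*α - (CFAux.cfP α r : ℝ)) := by linear_combination (-1:ℝ) * hcR
  have hqmR : (cfQ α r:ℝ) ≤ (m:ℝ) := by exact_mod_cast hqr_le_m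
  have habs2 : |(cfQ α r:ℝ)*α - (CFAux.cfP α r:ℝ)| ≤ |(m:ℝ)*α - (u':ℝ)| := by
    have h2 := congrArg abs hid
    rw [abs_mul, abs_mul, abs_of_pos (show (0:ℝ) < (cfQ α r:ℝ) from lt_of_lt_of_le zero_lt_one hqrR),
      abs_of_pos hmR_pos] at h2
    nlinarith [abs_nonneg ((m:ℝ)*α - (u':ℝ)), abs_nonneg ((cfQ α r:ℝ)*α - (CFAux.cfP α r:ℝ))]
  have hPpos := CFAux.prod_pos hirr hα r
  have habsD : |(cfQ α r:ℝ)*α - (CFAux.cfP α r:ℝ)| = ∏ i ∈ Finset.range (r+1), gaussMap^[i] α := by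
    rw [CFAux.D_eq hirr hα r, abs_mul, abs_pow, abs_neg, abs_one, one_pow, one_mul,
      abs_of_pos hPpos]
  have hge := CFAux.prod_ge hirr hα r
  rcases lt_or_ge r n with hrn | hnr
  · have hmon : (cfQ α (r+1) : ℝ) ≤ (cfQ α n : ℝ) := by
      exact_mod_cast CFAux.cfQ_mono hirr hα (Nat.succ_le_of_lt hrn)
    have hqr1R : (1:ℝ) ≤ (cfQ α (r+1) : ℝ) := by
      exact_mod_cast CFAux.one_le_cfQ hirr hα (r+1)
    have e0 : 1/(2*(cfQ α n:ℝ)) ≤ 1/(2*(cfQ α (r+1):ℝ)) := by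
      apply one_div_le_one_div_of_le (by linarith) (by linarith)
    have e1 : 1/(2*(Q:ℝ)*(cfQ α n:ℝ)) < 1/(2*(cfQ α n:ℝ)) := by
      apply one_div_lt_one_div_of_lt (by linarith)
      nlinarith
    linarith
  · have hNr : N ≤ r := le_trans hn.le hnr
    have hnotdvd := hdiv r hNr
    have hQprime : Prime (Q:ℤ) := Nat.prime_iff_prime_int.mp hQ
    have hcop : IsCoprime ((Q:ℤ)) (cfQ α r) := hQprime.coprime_iff_not_dvd.mpr hnotdvd
    have hjdvd : cfQ α r ∣ j := hcop.symm.dvd_of_dvd_mul_right (hm ▸ hqrdvd)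
    have hle_j : cfQ α r ≤ j := Int.le_of_dvd hj0 hjdvd
    have hmon : cfQ α n ≤ cfQ α r := CFAux.cfQ_mono hirr hα hnr
    omega
end

section
/- Let α be irrational with continued fraction denominators (q_n), and Q prime. Then there exist a subsequence n_k → ∞ and θ > 0 such that the minimal distance between discontinuities of φ_{q_{n_k}}, namely disc(q) := min over (ℓ,j) ≠ (0,0), |ℓ| ≤ Q-1, |j| ≤ q-1 of ‖ℓ/Q - jα‖, satisfies disc(q_{n_k}) ≥ θ/q_{n_k}. -/
set_option linter.unusedVariables false
set_option linter.unusedSectionVars false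
set_option maxHeartbeats 1000000

namespace Stmt8

/-- iterates of the Gauss map -/
noncomputable def al (α : ℝ) (t : ℕ) : ℝ := gaussMap^[t] α

lemma al_zero (α : ℝ) : al α 0 = α := rfl

lemma al_succ (α : ℝ) (t : ℕ) : al α (t + 1) = Int.fract (al α t)⁻¹ := by
  rw [al, Function.iterate_succ_apply']; rfl

lemma gauss_step {x : ℝ} (hx : x ∈ Set.Ioo (0:ℝ) 1) (hirr : Irrational x) :
    Int.fract x⁻¹ ∈ Set.Ioo (0:ℝ) 1 ∧ Irrational (Int.fract x⁻¹) := by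
  have hinv : Irrational x⁻¹ := hirr.inv
  have hfr : Irrational (Int.fract x⁻¹) := by
    rw [Int.fract]; exact hinv.sub_intCast _
  refine ⟨⟨?_, ?_⟩, hfr⟩
  · rcases lt_or_eq_of_le (Int.fract_nonneg x⁻¹) with h | h
    · exact h
    · exact absurd (h ▸ rfl : Int.fract x⁻¹ = 0) (by
        intro h0
        exact hfr (h0 ▸ ⟨0, by norm_num⟩))
  · exact Int.fract_lt_one _

lemma al_mem (α : ℝ) (hα : α ∈ Set.Ioo (0:ℝ) 1) (hirr : Irrational α) (t : ℕ) :
    al α t ∈ Set.Ioo (0:ℝ) 1 ∧ Irrational (al α t) := by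
  induction t with
  | zero => exact ⟨hα, hirr⟩
  | succ t ih => rw [al_succ]; exact gauss_step ih.1 ih.2

section main

variable (α : ℝ)

/-- numerators -/
noncomputable def P (α : ℝ) : ℕ → ℤ
  | 0 => 0
  | 1 => 1
  | (n + 2) => cfA α (n + 2) * P α (n + 1) + P α n

/-- products of Gauss iterates -/
noncomputable def be (α : ℝ) (n : ℕ) : ℝ := ∏ t ∈ Finset.range (n + 1), al α t

variable (hα : α ∈ Set.Ioo (0:ℝ) 1) (hirr : Irrational α)
include hα hirr

lemma al_pos (t : ℕ) : 0 < al α t := (al_mem α hα hirr t).1.1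
lemma al_lt_one (t : ℕ) : al α t < 1 := (al_mem α hα hirr t).1.2

omit hα hirr in
lemma cfA_eq (t : ℕ) : cfA α (t + 1) = ⌊(al α t)⁻¹⌋ := by
  simp [cfA, al]

lemma cfA_pos (t : ℕ) : 1 ≤ cfA α (t + 1) := by
  rw [cfA_eq α]
  have h1 : (1:ℝ) < (al α t)⁻¹ :=
    (one_lt_inv₀ (al_pos α hα hirr t)).mpr (al_lt_one α hα hirr t)
  exact_mod_cast Int.le_floor.mpr (by exact_mod_cast h1.le)

lemma inv_al_eq (t : ℕ) : (al α t)⁻¹ = cfA α (t + 1) + al α (t + 1) := by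
  rw [al_succ, cfA_eq α, Int.fract]; ring

lemma be_pos (n : ℕ) : 0 < be α n :=
  Finset.prod_pos fun t _ => al_pos α hα hirr t

omit hα hirr in
lemma be_succ (n : ℕ) : be α (n + 1) = be α n * al α (n + 1) := by
  rw [be, be, Finset.prod_range_succ]

lemma be_lt (n : ℕ) : be α (n + 1) < be α n := by
  have h := al_lt_one α hα hirr (n+1)
  have hp := be_pos α hα hirr n
  rw [be_succ]
  nlinarith

omit hα hirr in
lemma be_zero : be α 0 = α := by simp [be, al_zero]


omit hα hirr in
lemma cfQ_two_step (n : ℕ) : cfQ α (n+2) = cfA α (n+2) * cfQ α (n+1) + cfQ α n := rfl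

omit hα hirr in
lemma P_two_step (n : ℕ) : P α (n+2) = cfA α (n+2) * P α (n+1) + P α n := rfl

lemma be_rec (n : ℕ) : be α (n+1) * ((cfA α (n+2) : ℝ) + al α (n+2)) = be α n := by
  have h := inv_al_eq α hα hirr (n+1)
  have hne := (al_pos α hα hirr (n+1)).ne'
  rw [← h, be_succ]
  exact mul_inv_cancel_right₀ hne (be α n)

lemma qa_sub_p (n : ℕ) :
    (cfQ α n : ℝ) * α - (P α n : ℝ) = (-1)^n * be α n := by
  induction n using Nat.twoStepInduction with
  | zero =>
    simp [cfQ, P, be_zero]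
  | one =>
    have h := inv_al_eq α hα hirr 0
    have h0 : al α 0 = α := al_zero α
    have hαne : α ≠ 0 := ne_of_gt hα.1
    have hb : be α 1 = α * al α 1 := by rw [be_succ, be_zero]
    show (cfQ α 1 : ℝ) * α - (P α 1 : ℝ) = (-1)^1 * be α 1
    have hc : cfQ α 1 = cfA α 1 := rfl
    have hp : P α 1 = 1 := rfl
    rw [hc, hp, hb]
    rw [h0] at h
    have : (cfA α 1 : ℝ) = α⁻¹ - al α 1 := by
      have h1 : (cfA α (0+1) : ℝ) = α⁻¹ - al α (0+1) := by rw [h]; ring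
      simpa using h1
    rw [this]
    field_simp
    push_cast; ring
  | more n h0 h1 =>
    have hX : be α (n+2) = be α n - (cfA α (n+2) : ℝ) * be α (n+1) := by
      linear_combination (be_succ α (n+1)) + (be_rec α hα hirr n)
    rw [cfQ_two_step, P_two_step]
    push_cast
    rw [hX]
    linear_combination (cfA α (n+2) : ℝ) * h1 + h0

lemma one_eq (n : ℕ) :
    (cfQ α (n+1) : ℝ) * be α n + (cfQ α n : ℝ) * be α (n+1) = 1 := by
  induction n with
  | zero =>
    have h := inv_al_eq α hα hirr 0
    have hαne : α ≠ 0 := ne_of_gt hα.1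
    have hb : be α 1 = α * al α 1 := by rw [be_succ, be_zero]
    have hc : cfQ α 1 = cfA α 1 := rfl
    have hq0 : cfQ α 0 = 1 := rfl
    rw [hb, hc, hq0, be_zero]
    rw [al_zero] at h
    have : (cfA α 1 : ℝ) = α⁻¹ - al α 1 := by
      have h1 : (cfA α (0+1) : ℝ) = α⁻¹ - al α (0+1) := by rw [h]; ring
      simpa using h1
    rw [this]
    field_simp
    push_cast; ring
  | succ n ih =>
    have hbr := be_rec α hα hirr n
    have hbs : be α (n+2) = be α (n+1) * al α (n+2) := be_succ α (n+1)
    rw [cfQ_two_step]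
    push_cast
    rw [hbs]
    linear_combination ih + (cfQ α (n+1) : ℝ) * hbr

omit hα hirr in
lemma det_eq (n : ℕ) : cfQ α n * P α (n+1) - cfQ α (n+1) * P α n = (-1)^n := by
  induction n with
  | zero => simp [cfQ, P]
  | succ n ih =>
    rw [cfQ_two_step, P_two_step]
    push_cast
    ring_nf
    ring_nf at ih
    linarith [ih]

lemma one_le_q (n : ℕ) : 1 ≤ cfQ α n := by
  induction n using Nat.twoStepInduction with
  | zero => exact le_refl 1
  | one => exact cfA_pos α hα hirr 0
  | more n h0 h1 =>
    rw [cfQ_two_step]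
    have ha := cfA_pos α hα hirr (n+1)
    nlinarith

lemma q_le_succ (n : ℕ) : cfQ α n ≤ cfQ α (n+1) := by
  cases n with
  | zero => exact cfA_pos α hα hirr 0
  | succ n =>
    rw [cfQ_two_step]
    have ha := cfA_pos α hα hirr (n+1)
    have h0 := one_le_q α hα hirr n
    have h1 := one_le_q α hα hirr (n+1)
    nlinarith

lemma q_mono : Monotone (cfQ α) :=
  monotone_nat_of_le_succ (q_le_succ α hα hirr)

lemma q_add_le (n : ℕ) : cfQ α n + cfQ α (n+1) ≤ cfQ α (n+2) := by
  rw [cfQ_two_step]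
  have ha := cfA_pos α hα hirr (n+1)
  have h1 := one_le_q α hα hirr (n+1)
  nlinarith

lemma le_q_succ (n : ℕ) : (n : ℤ) + 1 ≤ cfQ α (n+1) := by
  induction n with
  | zero => exact cfA_pos α hα hirr 0
  | succ n ih =>
    have h := q_add_le α hα hirr n
    have h0 := one_le_q α hα hirr n
    have h2 : ((n:ℤ) + 1) + 1 ≤ cfQ α (n + 2) := by omega
    push_cast
    exact h2

lemma q_pos_real (n : ℕ) : (0 : ℝ) < (cfQ α n : ℝ) := by
  exact_mod_cast lt_of_lt_of_le one_pos (one_le_q α hα hirr n)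

lemma be_lt_inv (n : ℕ) : (cfQ α (n+1) : ℝ) * be α n < 1 := by
  have h := one_eq α hα hirr n
  have h1 := q_pos_real α hα hirr n
  have h2 := be_pos α hα hirr (n+1)
  nlinarith

lemma one_le_two_q_be (n : ℕ) : 1 ≤ 2 * ((cfQ α (n+1) : ℝ) * be α n) := by
  have h := one_eq α hα hirr n
  have h1 : (cfQ α n : ℝ) ≤ (cfQ α (n+1) : ℝ) := by
    exact_mod_cast q_le_succ α hα hirr n
  have h2 := be_lt α hα hirr n
  have h3 := be_pos α hα hirr (n+1)
  have h4 := q_pos_real α hα hirr n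
  nlinarith


omit hα hirr in
lemma decomp (m : ℕ) (k p : ℤ) :
    ∃ x y : ℤ, k = x * cfQ α m + y * cfQ α (m+1) ∧ p = x * P α m + y * P α (m+1) := by
  induction m with
  | zero =>
    refine ⟨k - p * cfQ α 1, p, ?_, ?_⟩
    · have h0 : cfQ α 0 = 1 := rfl
      rw [h0]; ring
    · have h0 : P α 0 = 0 := rfl
      have h1 : P α 1 = 1 := rfl
      rw [h0, h1]; ring
  | succ m ih =>
    obtain ⟨x, y, hk, hp⟩ := ih
    refine ⟨y - cfA α (m+2) * x, x, ?_, ?_⟩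
    · rw [cfQ_two_step, hk]; ring
    · rw [P_two_step, hp]; ring

lemma key_lin (m : ℕ) (k p x y : ℤ)
    (hk : k = x * cfQ α m + y * cfQ α (m+1)) (hp : p = x * P α m + y * P α (m+1)) :
    |(k : ℝ) * α - (p : ℝ)| = |(x : ℝ) * be α m - (y : ℝ) * be α (m+1)| := by
  have hk' : (k : ℝ) = (x : ℝ) * (cfQ α m : ℝ) + (y : ℝ) * (cfQ α (m+1) : ℝ) := by
    exact_mod_cast congrArg (fun z : ℤ => (z : ℝ)) hk
  have hp' : (p : ℝ) = (x : ℝ) * (P α m : ℝ) + (y : ℝ) * (P α (m+1) : ℝ) := by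
    exact_mod_cast congrArg (fun z : ℤ => (z : ℝ)) hp
  have h1 := qa_sub_p α hα hirr m
  have h2 := qa_sub_p α hα hirr (m+1)
  have key : (k : ℝ) * α - (p : ℝ) = (-1)^m * ((x : ℝ) * be α m - (y : ℝ) * be α (m+1)) := by
    linear_combination (x : ℝ) * h1 + (y : ℝ) * h2 + α * hk' - hp'
  rw [key, abs_mul, abs_pow, abs_neg, abs_one, one_pow, one_mul]

lemma shift (m t : ℕ) :
    ∃ A B : ℤ, 0 ≤ A ∧ 0 ≤ B ∧ (t = 0 ∨ 1 ≤ A) ∧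
      cfQ α (m+t) = A * cfQ α (m+1) + B * cfQ α m := by
  induction t using Nat.twoStepInduction with
  | zero =>
    exact ⟨0, 1, le_refl 0, by norm_num, Or.inl rfl, by ring⟩
  | one =>
    exact ⟨1, 0, by norm_num, le_refl 0, Or.inr (le_refl 1), by ring⟩
  | more t h0 h1 =>
    obtain ⟨A0, B0, hA0, hB0, _, hq0⟩ := h0
    obtain ⟨A1, B1, hA1, hB1, hA1', hq1⟩ := h1
    have hA1'' : 1 ≤ A1 := hA1'.resolve_left (by omega)
    have ha := cfA_pos α hα hirr (m + t + 1)
    refine ⟨cfA α (m+t+2) * A1 + A0, cfA α (m+t+2) * B1 + B0, by nlinarith, by nlinarith,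
      Or.inr (by nlinarith), ?_⟩
    have hrec : cfQ α (m+t+2) = cfA α (m+t+2) * cfQ α (m+t+1) + cfQ α (m+t) := cfQ_two_step α (m+t)
    have e2 : m + (t+2) = (m+t)+2 := by omega
    have e1 : m + (t+1) = (m+t)+1 := by omega
    rw [e1] at hq1
    rw [e2, hrec, hq0, hq1]
    ring

lemma not_dvd_succ (Qz : ℤ) (hp : Prime Qz) (m : ℕ) (h : Qz ∣ cfQ α m) :
    ¬ Qz ∣ cfQ α (m+1) := by
  intro h2
  have hd := det_eq α m
  have hdv : Qz ∣ (-1 : ℤ)^m := by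
    rw [← hd]
    exact dvd_sub (h.mul_right _) (h2.mul_right _)
  have : IsUnit Qz := isUnit_of_dvd_unit hdv (isUnit_one.neg.pow m)
  exact hp.not_unit this

lemma dvd_gap (Qz : ℤ) (hp : Prime Qz) (m m' : ℕ) (hlt : m < m')
    (h1 : Qz ∣ cfQ α m) (h2 : Qz ∣ cfQ α m') :
    Qz * cfQ α (m+1) ≤ cfQ α m' := by
  obtain ⟨t, rfl⟩ : ∃ t, m' = m + t := ⟨m' - m, by omega⟩
  obtain ⟨A, B, hA, hB, hA1, hq⟩ := shift α hα hirr m t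
  have ht : t ≠ 0 := by omega
  have hA1' : 1 ≤ A := hA1.resolve_left ht
  have hdvA : Qz ∣ A * cfQ α (m+1) := by
    have he : A * cfQ α (m+1) = cfQ α (m+t) - B * cfQ α m := by omega
    rw [he]
    exact dvd_sub h2 (h1.mul_left B)
  rcases hp.dvd_mul.mp hdvA with hc | hc
  · have hQA : Qz ≤ A := Int.le_of_dvd (by omega) hc
    have hq1 := one_le_q α hα hirr (m+1)
    have hqm := one_le_q α hα hirr m
    nlinarith
  · exact absurd hc (not_dvd_succ α hα hirr Qz hp m h1)


end main

/-- `n` is a good index for the prime `Qz`. -/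
def Good (α : ℝ) (Qz : ℤ) (n : ℕ) : Prop :=
  ∀ m, Qz ∣ cfQ α m → cfQ α m < Qz * cfQ α n → cfQ α (m+1) ≤ 4 * Qz * cfQ α n

section main2

variable (α : ℝ) (hα : α ∈ Set.Ioo (0:ℝ) 1) (hirr : Irrational α)
include hα hirr

lemma key (Qz : ℤ) (hpr : Prime Qz) (hQ2 : 2 ≤ Qz) (n : ℕ) (hg : Good α Qz n)
    (k p : ℤ) (hk0 : 0 < k) (hkQ : k ≤ Qz * (cfQ α n - 1)) (hdvd : Qz ∣ k) :
    1 / (8 * (Qz:ℝ) * (cfQ α n : ℝ)) ≤ |(k : ℝ) * α - (p : ℝ)| := by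
  -- find the minimal level m with k < q_{m+1}
  have hex : ∃ m : ℕ, k < cfQ α (m+1) := by
    refine ⟨k.toNat, ?_⟩
    have h := le_q_succ α hα hirr k.toNat
    have : (k.toNat : ℤ) = k := Int.toNat_of_nonneg hk0.le
    omega
  classical
  set m := Nat.find hex with hmdef
  have hm : k < cfQ α (m+1) := Nat.find_spec hex
  have hmin : 1 ≤ m → cfQ α m ≤ k := by
    intro h1
    have := Nat.find_min hex (m := m - 1) (by omega)
    have he : m - 1 + 1 = m := by omega
    rw [he] at this
    omega
  -- basic positivity and size facts
  have hqn1 := one_le_q α hα hirr n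
  have hqm1 := one_le_q α hα hirr m
  have hqm11 := one_le_q α hα hirr (m+1)
  have hqm_le : cfQ α m ≤ Qz * cfQ α n := by
    rcases Nat.eq_zero_or_pos m with h0 | h1
    · have : cfQ α m = 1 := by rw [h0]; rfl
      nlinarith
    · have := hmin h1
      nlinarith
  -- the decomposition
  obtain ⟨x, y, hkd, hpd⟩ := decomp α m k p
  rw [key_lin α hα hirr m k p x y hkd hpd]
  -- real versions
  have hQrge : (2:ℝ) ≤ (Qz:ℝ) := by exact_mod_cast hQ2
  have hqnge : (1:ℝ) ≤ (cfQ α n : ℝ) := by exact_mod_cast hqn1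
  have hqmge : (1:ℝ) ≤ (cfQ α m : ℝ) := by exact_mod_cast hqm1
  have hqm1ge : (1:ℝ) ≤ (cfQ α (m+1) : ℝ) := by exact_mod_cast hqm11
  have hkR : (k:ℝ) = (x:ℝ) * (cfQ α m : ℝ) + (y:ℝ) * (cfQ α (m+1) : ℝ) := by
    exact_mod_cast congrArg (fun z : ℤ => (z:ℝ)) hkd
  have hmR : (k:ℝ) < (cfQ α (m+1) : ℝ) := by exact_mod_cast hm
  have hk0R : (0:ℝ) < (k:ℝ) := by exact_mod_cast hk0
  have hqmR : (cfQ α m : ℝ) ≤ (Qz:ℝ) * (cfQ α n : ℝ) := by exact_mod_cast hqm_le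
  have hkQR : (k:ℝ) ≤ (Qz:ℝ) * (cfQ α n : ℝ) - (Qz:ℝ) := by
    have h' : (k:ℝ) ≤ (Qz:ℝ) * ((cfQ α n : ℝ) - 1) := by exact_mod_cast hkQ
    nlinarith
  set Qr : ℝ := (Qz : ℝ) with hQr
  set qn : ℝ := (cfQ α n : ℝ) with hqn
  set qm : ℝ := (cfQ α m : ℝ) with hqm
  set qm1 : ℝ := (cfQ α (m+1) : ℝ) with hqm1r
  set bm : ℝ := be α m with hbm
  set bm1 : ℝ := be α (m+1) with hbm1
  have hbmpos : 0 < bm := be_pos α hα hirr m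
  have hbm1pos : 0 < bm1 := be_pos α hα hirr (m+1)
  have hlb : 1 ≤ 2 * (qm1 * bm) := one_le_two_q_be α hα hirr m
  have hpos8 : (0:ℝ) < 8 * Qr * qn := by nlinarith
  rw [div_le_iff₀ hpos8]
  -- case analysis
  have hQrpos : (0:ℝ) < Qr := by linarith
  have hqnpos : (0:ℝ) < qn := by linarith
  have hqmpos : (0:ℝ) < qm := by linarith
  have hqm1pos : (0:ℝ) < qm1 := by linarith
  rcases lt_trichotomy x 0 with hx | hx | hx
  · -- x < 0
    have hxR : (x:ℝ) ≤ -1 := by exact_mod_cast (by omega : x ≤ -1)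
    rcases lt_trichotomy y 0 with hy | hy | hy
    · -- x<0, y<0 : k < 0, contradiction
      exfalso
      have hyR : (y:ℝ) ≤ -1 := by exact_mod_cast (by omega : y ≤ -1)
      nlinarith only [hkR, hxR, hyR, hqmge, hqm1ge, hk0R]
    · -- y = 0 : k = x*q_m ≤ 0, contradiction
      exfalso
      subst hy
      push_cast at hkR
      nlinarith only [hkR, hxR, hqmge, hk0R]
    · -- x<0, y>0
      have hyR : (1:ℝ) ≤ (y:ℝ) := by exact_mod_cast hy
      have habs : (-(x:ℝ)) * bm ≤ |(x:ℝ) * bm - (y:ℝ) * bm1| := by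
        rw [abs_sub_comm]
        calc (-(x:ℝ)) * bm ≤ (y:ℝ) * bm1 - (x:ℝ)*bm := by
              nlinarith only [hyR, hbm1pos]
          _ ≤ |(y:ℝ) * bm1 - (x:ℝ)*bm| := le_abs_self _
      have hxq' : qm1 - (k:ℝ) ≤ (-(x:ℝ)) * qm := by
        nlinarith only [hkR, hyR, hqm1ge]
      have habs8 : (-(x:ℝ)) * bm * (8 * Qr * qn) ≤ |(x:ℝ) * bm - (y:ℝ) * bm1| * (8 * Qr * qn) :=
        mul_le_mul_of_nonneg_right habs hpos8.le
      have hxbm : (0:ℝ) ≤ (-(x:ℝ)) * bm := by nlinarith only [hxR, hbmpos]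
      rcases le_or_gt (2*k) (cfQ α (m+1)) with hcase | hcase
      · -- 2k ≤ q_{m+1}
        have hcR : 2*(k:ℝ) ≤ qm1 := by
          rw [hqm1r]; exact_mod_cast hcase
        have step1 : qm1 ≤ 2 * ((-(x:ℝ)) * qm) := by linarith
        have step1' := mul_le_mul_of_nonneg_right step1 hbmpos.le
        have step2 : 1 ≤ ((-(x:ℝ)) * bm) * (8 * qm) := by nlinarith only [hlb, step1']
        have step3 : ((-(x:ℝ)) * bm) * (8 * qm) ≤ ((-(x:ℝ)) * bm) * (8 * Qr * qn) := by
          nlinarith only [hxbm, hqmR]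
        calc (1:ℝ) ≤ ((-(x:ℝ)) * bm) * (8 * qm) := step2
          _ ≤ (-(x:ℝ)) * bm * (8 * Qr * qn) := step3
          _ ≤ |(x:ℝ) * bm - (y:ℝ) * bm1| * (8 * Qr * qn) := habs8
      · -- q_{m+1} < 2k
        have hcR : qm1 < 2*(k:ℝ) := by
          rw [hqm1r]; exact_mod_cast hcase
        have hxm1 : (1:ℝ) ≤ -(x:ℝ) := by linarith
        have h4 : qm1 ≤ 2*(Qr*qn) := by nlinarith only [hcR, hkQR, hQrpos]
        have h4' := mul_le_mul_of_nonneg_right h4 hbmpos.le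
        have h5 : 1 ≤ 4 * (Qr*qn) * bm := by nlinarith only [hlb, h4']
        have hprod : (0:ℝ) < bm * (Qr * qn) := mul_pos hbmpos (mul_pos hQrpos hqnpos)
        have h6 : 4 * (Qr*qn) * bm ≤ ((-(x:ℝ)) * bm) * (8 * Qr * qn) := by
          nlinarith only [hxm1, hprod]
        calc (1:ℝ) ≤ 4 * (Qr*qn) * bm := h5
          _ ≤ ((-(x:ℝ)) * bm) * (8 * Qr * qn) := h6
          _ ≤ |(x:ℝ) * bm - (y:ℝ) * bm1| * (8 * Qr * qn) := habs8
  · -- x = 0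
    exfalso
    subst hx
    push_cast at hkR
    rcases lt_trichotomy y 0 with hy | hy | hy
    · have hyR : (y:ℝ) ≤ -1 := by exact_mod_cast (by omega : y ≤ -1)
      nlinarith only [hkR, hyR, hqm1ge, hk0R]
    · subst hy
      push_cast at hkR
      nlinarith only [hkR, hk0R]
    · have hyR : (1:ℝ) ≤ (y:ℝ) := by exact_mod_cast hy
      nlinarith only [hkR, hyR, hqm1ge, hmR]
  · -- x > 0
    have hxR : (1:ℝ) ≤ (x:ℝ) := by exact_mod_cast hx
    rcases lt_trichotomy y 0 with hy | hy | hy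
    · -- x>0, y<0
      have hyR : (y:ℝ) ≤ -1 := by exact_mod_cast (by omega : y ≤ -1)
      have habs : (x:ℝ) * bm ≤ |(x:ℝ) * bm - (y:ℝ) * bm1| := by
        calc (x:ℝ) * bm ≤ (x:ℝ) * bm - (y:ℝ) * bm1 := by
              nlinarith only [hyR, hbm1pos]
          _ ≤ |(x:ℝ) * bm - (y:ℝ) * bm1| := le_abs_self _
      have habs8 : (x:ℝ) * bm * (8 * Qr * qn) ≤ |(x:ℝ) * bm - (y:ℝ) * bm1| * (8 * Qr * qn) :=
        mul_le_mul_of_nonneg_right habs hpos8.le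
      have hxbm : (0:ℝ) ≤ (x:ℝ) * bm := by nlinarith only [hxR, hbmpos]
      have hxq : qm1 ≤ (x:ℝ) * qm := by
        nlinarith only [hkR, hyR, hqm1ge, hk0R]
      have hxq' := mul_le_mul_of_nonneg_right hxq hbmpos.le
      have step2 : 1 ≤ ((x:ℝ) * bm) * (8 * qm) := by nlinarith only [hlb, hxq']
      have step3 : ((x:ℝ) * bm) * (8 * qm) ≤ ((x:ℝ) * bm) * (8 * Qr * qn) := by
        nlinarith only [hxbm, hqmR]
      calc (1:ℝ) ≤ ((x:ℝ) * bm) * (8 * qm) := step2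
        _ ≤ (x:ℝ) * bm * (8 * Qr * qn) := step3
        _ ≤ |(x:ℝ) * bm - (y:ℝ) * bm1| * (8 * Qr * qn) := habs8
    · -- y = 0 : k = x * q_m
      subst hy
      have hkxq : k = x * cfQ α m := by omega
      have habs : (x:ℝ) * bm ≤ |(x:ℝ) * bm - ((0:ℤ):ℝ) * bm1| := by
        push_cast
        rw [zero_mul, sub_zero, abs_of_pos (by nlinarith only [hxR, hbmpos])]
      have habs8 : (x:ℝ) * bm * (8 * Qr * qn) ≤ |(x:ℝ) * bm - ((0:ℤ):ℝ) * bm1| * (8 * Qr * qn) :=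
        mul_le_mul_of_nonneg_right habs hpos8.le
      have hQzpos : (0:ℤ) < Qz := by omega
      rcases hpr.dvd_mul.mp (hkxq ▸ hdvd) with hc | hc
      · -- Qz ∣ x : then m < n
        have hQx : Qz ≤ x := Int.le_of_dvd hx hc
        have hmul : Qz * cfQ α m ≤ x * cfQ α m :=
          mul_le_mul_of_nonneg_right hQx (by omega)
        have h2' : Qz * (cfQ α m + 1) ≤ Qz * cfQ α n := by
          have hkk : x * cfQ α m ≤ Qz * (cfQ α n - 1) := hkxq ▸ hkQ
          linarith
        have hqmn : cfQ α m + 1 ≤ cfQ α n := le_of_mul_le_mul_left h2' hQzpos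
        have hmn : m + 1 ≤ n := by
          by_contra hcon
          have hnm : n ≤ m := by omega
          have := q_mono α hα hirr hnm
          omega
        have hle : cfQ α (m+1) ≤ cfQ α n := q_mono α hα hirr hmn
        have hleR : qm1 ≤ qn := by rw [hqm1r, hqn]; exact_mod_cast hle
        have e1 : qm1 * bm ≤ qn * bm := mul_le_mul_of_nonneg_right hleR hbmpos.le
        have c1 : 1 ≤ 2 * (qn * bm) := by linarith
        have d1 : (2:ℝ) ≤ (x:ℝ) * Qr := by nlinarith only [hxR, hQrge]
        have hbmqn : (0:ℝ) < bm * qn := mul_pos hbmpos hqnpos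
        calc (1:ℝ) ≤ 2 * (qn * bm) := c1
          _ ≤ (x:ℝ) * bm * (8 * Qr * qn) := by nlinarith only [d1, hbmqn]
          _ ≤ |(x:ℝ) * bm - ((0:ℤ):ℝ) * bm1| * (8 * Qr * qn) := habs8
      · -- Qz ∣ q_m : by goodness q_{m+1} is controlled
        have hm1 : 1 ≤ m := by
          by_contra hcon
          have hm0 : m = 0 := by omega
          rw [hm0] at hc
          have hq0 : cfQ α 0 = 1 := rfl
          rw [hq0] at hc
          have := Int.le_of_dvd one_pos hc
          omega
        have hlt : cfQ α m < Qz * cfQ α n := by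
          have hh := hmin hm1
          linarith [hkQ, hQ2]
        have hgood := hg m hc hlt
        have hgoodR : qm1 ≤ 4 * Qr * qn := by
          rw [hqm1r, hQr, hqn]; exact_mod_cast hgood
        have e1 : qm1 * bm ≤ 4 * Qr * qn * bm := mul_le_mul_of_nonneg_right hgoodR hbmpos.le
        have hst : (0:ℝ) < bm * (Qr * qn) := mul_pos hbmpos (mul_pos hQrpos hqnpos)
        calc (1:ℝ) ≤ 2 * (qm1 * bm) := hlb
          _ ≤ (x:ℝ) * bm * (8 * Qr * qn) := by nlinarith only [hlb, e1, hxR, hst]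
          _ ≤ |(x:ℝ) * bm - ((0:ℤ):ℝ) * bm1| * (8 * Qr * qn) := habs8
    · -- x>0, y>0 : k ≥ q_{m+1}, contradiction
      exfalso
      have hyR : (1:ℝ) ≤ (y:ℝ) := by exact_mod_cast hy
      nlinarith only [hkR, hxR, hyR, hqmge, hqm1ge, hmR]


lemma good_infinite (Qz : ℤ) (hpr : Prime Qz) (hQ2 : 2 ≤ Qz) :
    {n : ℕ | Good α Qz n}.Infinite := by
  by_cases hZ : {m : ℕ | Qz ∣ cfQ α m}.Infinite
  · have hsub : (fun m => m + 1) '' {m : ℕ | Qz ∣ cfQ α m} ⊆ {n | Good α Qz n} := by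
      rintro _ ⟨m, hm, rfl⟩
      intro m' hdvd hlt
      rcases le_or_gt m' m with hle | hgt
      · have h1 : cfQ α (m'+1) ≤ cfQ α (m+1) := q_mono α hα hirr (by omega)
        have h2 : 1 ≤ cfQ α (m+1) := one_le_q α hα hirr (m+1)
        nlinarith only [h1, h2, hQ2]
      · have hgap := dvd_gap α hα hirr Qz hpr m m' hgt hm hdvd
        linarith
    exact (hZ.image (Set.injOn_of_injective (fun a b hab => by omega))).mono hsub
  · rw [Set.not_infinite] at hZ
    obtain ⟨M, hM⟩ := hZ.bddAbove
    set N : ℕ := (cfQ α (M+1)).toNat + 1 with hN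
    have hsub : Set.Ici N ⊆ {n | Good α Qz n} := by
      intro n hn
      intro m hdvd _
      have hmM : m ≤ M := hM hdvd
      have h1 : cfQ α (m+1) ≤ cfQ α (M+1) := q_mono α hα hirr (by omega)
      have h2 : ((N:ℤ) - 1) + 1 ≤ cfQ α N := by
        have h3 := le_q_succ α hα hirr (N-1)
        have h4 : N - 1 + 1 = N := by omega
        rw [h4] at h3
        push_cast at h3 ⊢
        omega
      have h5 : cfQ α (M+1) < (N:ℤ) := by
        have h6 : 0 ≤ cfQ α (M+1) := by linarith [one_le_q α hα hirr (M+1)]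
        omega
      have h7 : cfQ α N ≤ cfQ α n := q_mono α hα hirr hn
      have h8 : 1 ≤ cfQ α n := one_le_q α hα hirr n
      nlinarith only [h1, h2, h5, h7, h8, hQ2]
    exact (Set.Ici_infinite N).mono hsub

lemma key_signed (Qz : ℤ) (hpr : Prime Qz) (hQ2 : 2 ≤ Qz) (n : ℕ) (hg : Good α Qz n)
    (j p : ℤ) (hj0 : j ≠ 0) (hjQ : |j| ≤ cfQ α n - 1) :
    1 / (8 * (Qz:ℝ) * (cfQ α n : ℝ)) ≤ |((Qz * j : ℤ) : ℝ) * α - (p : ℝ)| := by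
  rcases lt_or_gt_of_ne hj0 with hj | hj
  · have h := key α hα hirr Qz hpr hQ2 n hg (Qz * (-j)) (-p)
      (by nlinarith only [hj, hQ2]) (by nlinarith only [hjQ, hQ2, abs_of_neg hj]) ⟨-j, rfl⟩
    have he : |((Qz * (-j) : ℤ) : ℝ) * α - ((-p : ℤ) : ℝ)| = |((Qz * j : ℤ) : ℝ) * α - (p : ℝ)| := by
      push_cast
      rw [show (Qz:ℝ) * -(j:ℝ) * α - (-(p:ℝ)) = -((Qz:ℝ) * (j:ℝ) * α - (p:ℝ)) by ring, abs_neg]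
    rw [← he]
    exact h
  · have h := key α hα hirr Qz hpr hQ2 n hg (Qz * j) p
      (by nlinarith only [hj, hQ2]) (by nlinarith only [hjQ, hQ2, abs_of_pos hj]) ⟨j, rfl⟩
    exact h

end main2


end Stmt8

/-- For `α` irrational and `Q` prime, there is a subsequence `(n_k)` tending to infinity
and `θ > 0` such that the minimal gap between the discontinuities
`{ℓ/Q - jα : |ℓ| ≤ Q-1, |j| ≤ q_{n_k}-1, (ℓ,j) ≠ (0,0)}` is at least `θ/q_{n_k}`. -/
theorem stmt8 (α : ℝ) (hα : α ∈ Set.Ioo (0 : ℝ) 1) (hirr : Irrational α)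
    (Q : ℕ) (hQ : Nat.Prime Q) :
    ∃ nk : ℕ → ℕ, StrictMono nk ∧ ∃ θ : ℝ, 0 < θ ∧
      ∀ k : ℕ, ∀ ℓ j : ℤ, |ℓ| ≤ (Q : ℤ) - 1 → |j| ≤ cfQ α (nk k) - 1 → (ℓ, j) ≠ (0, 0) →
        θ / (cfQ α (nk k) : ℝ) ≤ nint ((ℓ : ℝ) / (Q : ℝ) - (j : ℝ) * α) := by
  classical
  have hpr : Prime ((Q : ℤ)) := Nat.prime_iff_prime_int.mp hQ
  have hQ2 : (2:ℤ) ≤ (Q:ℤ) := by exact_mod_cast hQ.two_le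
  have hQR : (2:ℝ) ≤ (Q:ℝ) := by exact_mod_cast hQ.two_le
  have hQpos : (0:ℝ) < (Q:ℝ) := by linarith
  have hinf := Stmt8.good_infinite α hα hirr (Q:ℤ) hpr hQ2
  refine ⟨Nat.nth (fun n => Stmt8.Good α (Q:ℤ) n), Nat.nth_strictMono hinf,
    1/(8*(Q:ℝ)^2), by positivity, ?_⟩
  intro k ℓ j hℓ hj hne
  set n := Nat.nth (fun n => Stmt8.Good α (Q:ℤ) n) k with hn
  have hg : Stmt8.Good α (Q:ℤ) n := Nat.nth_mem_of_infinite hinf k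
  have hqn1 : 1 ≤ cfQ α n := Stmt8.one_le_q α hα hirr n
  have hqnR : (1:ℝ) ≤ (cfQ α n : ℝ) := by exact_mod_cast hqn1
  have hqnpos : (0:ℝ) < (cfQ α n : ℝ) := by linarith
  by_cases hj0 : j = 0
  · -- j = 0, ℓ ≠ 0
    subst hj0
    have hℓ0 : ℓ ≠ 0 := by
      intro h
      exact hne (by rw [h])
    rw [nint]
    set r := round ((ℓ:ℝ) / (Q:ℝ) - ((0:ℤ):ℝ) * α) with hr
    have hQdvd : ℓ - r * Q ≠ 0 := by
      intro h
      have hdv : (Q:ℤ) ∣ ℓ := ⟨r, by linear_combination h⟩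
      have := Int.le_of_dvd (abs_pos.mpr hℓ0) ((dvd_abs _ _).mpr hdv)
      omega
    have habs1 : (1:ℝ) ≤ |((ℓ - r * Q : ℤ) : ℝ)| := by
      rw [← Int.cast_abs]
      exact_mod_cast Int.one_le_abs hQdvd
    have hsimp : (ℓ:ℝ) / (Q:ℝ) - ((0:ℤ):ℝ) * α - (r:ℝ) = ((ℓ - r * Q : ℤ) : ℝ) / (Q:ℝ) := by
      push_cast
      field_simp
      ring
    rw [hsimp, abs_div, abs_of_pos hQpos]
    rw [div_le_div_iff₀ hqnpos hQpos]
    have h1 : 1/(8*(Q:ℝ)^2) * (Q:ℝ) ≤ 1 := by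
      rw [div_mul_eq_mul_div, div_le_one (by positivity)]
      nlinarith only [hQR]
    nlinarith only [h1, habs1, hqnR, hQpos]
  · -- j ≠ 0
    rw [nint]
    set r := round ((ℓ:ℝ) / (Q:ℝ) - (j:ℝ) * α) with hr
    have hk := Stmt8.key_signed α hα hirr (Q:ℤ) hpr hQ2 n hg j (ℓ - Q*r) hj0 hj
    have hXeq : ((ℓ:ℝ)/(Q:ℝ) - (j:ℝ)*α - (r:ℝ)) * (Q:ℝ) =
        -((((Q:ℤ) * j : ℤ) : ℝ) * α - ((ℓ - Q * r : ℤ) : ℝ)) := by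
      push_cast
      field_simp
      ring
    have heq : |(ℓ:ℝ) / (Q:ℝ) - (j:ℝ) * α - (r:ℝ)| =
        |(((Q:ℤ) * j : ℤ) : ℝ) * α - ((ℓ - Q * r : ℤ) : ℝ)| / (Q:ℝ) := by
      have h1 : |(((Q:ℤ) * j : ℤ) : ℝ) * α - ((ℓ - Q * r : ℤ) : ℝ)| =
          |(ℓ:ℝ)/(Q:ℝ) - (j:ℝ)*α - (r:ℝ)| * (Q:ℝ) := by
        rw [← abs_neg, ← hXeq, abs_mul, abs_of_pos hQpos]
      rw [eq_div_iff (ne_of_gt hQpos), h1]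
    rw [heq]
    have e : (1/(8*(Q:ℝ)^2)) / (cfQ α n : ℝ) = (1/(8*(Q:ℝ)*(cfQ α n : ℝ))) / (Q:ℝ) := by
      field_simp
    rw [e]
    exact (div_le_div_iff_of_pos_right hQpos).mpr hk
end

section
/- For every k ≥ 1, the parity states ε_k(0) mod Q and ε_{k+1}(0) mod Q generate the full cyclic group ℤ_Q, where ε_0(i) = P + i mod Q and ε_{k+1}(i) = (n_{k+1} - i - 1) ε_k(0) + ε_k(1) mod Q. -/
/-- For every `k ≥ 1`, the parity states `ε_k(0)` and `ε_{k+1}(0)` generate the full group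
`ℤ_Q`, where `ε_0(i) = P + i mod Q` and
`ε_{k+1}(i) = (n_{k+1} - i - 1) ε_k(0) + ε_k(1) mod Q`, with `n_k ≥ 2`. -/
theorem stmt11 (Q : ℕ) (hQ : 2 ≤ Q) (P : ZMod Q) (n : ℕ → ℤ) (hn : ∀ k, 2 ≤ n k)
    (ε0 ε1 : ℕ → ZMod Q)
    (h00 : ε0 0 = P) (h10 : ε1 0 = P + 1)
    (h0 : ∀ k, ε0 (k + 1) = ((n (k + 1) - 1 : ℤ) : ZMod Q) * ε0 k + ε1 k)
    (h1 : ∀ k, ε1 (k + 1) = ((n (k + 1) - 2 : ℤ) : ZMod Q) * ε0 k + ε1 k) :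
    ∀ k : ℕ, 1 ≤ k → AddSubgroup.closure ({ε0 k, ε0 (k + 1)} : Set (ZMod Q)) = ⊤ := by
  intro k hk
  haveI : NeZero Q := ⟨by omega⟩
  set S := AddSubgroup.closure ({ε0 k, ε0 (k + 1)} : Set (ZMod Q)) with hS
  have hm0 : ε0 k ∈ S := AddSubgroup.subset_closure (by simp)
  have hm1 : ε0 (k + 1) ∈ S := AddSubgroup.subset_closure (by simp)
  have hε1k : ε1 k ∈ S := by
    have e : ε1 k = ε0 (k + 1) - (n (k + 1) - 1 : ℤ) • ε0 k := by
      rw [h0 k, zsmul_eq_mul]; push_cast; ring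
    rw [e]
    exact sub_mem hm1 (zsmul_mem hm0 _)
  have key : ∀ m, ε0 m ∈ S → ε1 m ∈ S → (1 : ZMod Q) ∈ S := by
    intro m
    induction m with
    | zero =>
      intro hA hB
      have e : (1 : ZMod Q) = ε1 0 - ε0 0 := by rw [h00, h10]; ring
      rw [e]; exact sub_mem hB hA
    | succ m ih =>
      intro hA hB
      have e0 : ε0 m = ε0 (m + 1) - ε1 (m + 1) := by
        rw [h0 m, h1 m]; push_cast; ring
      have hε0m : ε0 m ∈ S := by rw [e0]; exact sub_mem hA hB
      have e1 : ε1 m = ε1 (m + 1) - (n (m + 1) - 2 : ℤ) • ε0 m := by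
        rw [h1 m, zsmul_eq_mul]; push_cast; ring
      have hε1m : ε1 m ∈ S := by rw [e1]; exact sub_mem hB (zsmul_mem hε0m _)
      exact ih hε0m hε1m
  have h1mem := key k hm0 hε1k
  rw [AddSubgroup.eq_top_iff']
  intro x
  have e : x = x.val • (1 : ZMod Q) := by
    rw [nsmul_eq_mul, mul_one, ZMod.natCast_val, ZMod.cast_id]
  rw [e]
  exact nsmul_mem h1mem _
end

section
/- Let Π(θ) be an S×S complex matrix with entries Π_{s,t}(θ) = P(L_s = t)·E(e^{2πi⟨θ, W_{s,t}⟩}) where for each s, (P(L_s = t))_{t∈S} is a probability vector. If Π(θ)v = ξv with v ≠ 0, then |ξ| ≤ 1; moreover |ξ| = 1 implies |v_s| is constant in s and Π(θ)_{s,t} = ξ v_s \overline{v_t} Π(0)_{s,t} for all s,t (after normalizing ‖v‖_∞ = 1), provided all P(L_s=t) > 0. -/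
open MeasureTheory

/-- The characteristic matrix `Π(θ)_{s,t} = P(L_s = t)·E(e^{2πi⟨θ, W_{s,t}⟩})` of a
random affine transformation `(L, W)`. -/
noncomputable def charMat {S : Type*} [Fintype S] [DecidableEq S] {d : ℕ} {Ω : Type*}
    [MeasurableSpace Ω] (μ : Measure Ω) (L : S → Ω → S)
    (W : S → S → Ω → EuclideanSpace ℝ (Fin d))
    (θ : EuclideanSpace ℝ (Fin d)) : Matrix S S ℂ :=
  fun s t => ((μ {ω | L s ω = t}).toReal : ℂ) *
    ∫ ω, Complex.exp (2 * Real.pi * Complex.I * ((inner ℝ θ (W s t ω) : ℝ) : ℂ)) ∂μ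

/-- If `Π(θ) v = ξ v` with `v ≠ 0`, where each row `(P(L_s = t))_t` is a probability vector
with strictly positive entries, then `|ξ| ≤ 1`; and if `|ξ| = 1` then `|v_s|` is constant
in `s`, and after normalizing `‖v‖_∞ = 1`,
`Π(θ)_{s,t} = ξ v_s conj(v_t) Π(0)_{s,t}` for all `s, t`. -/
theorem stmt16 {S : Type*} [Fintype S] [DecidableEq S] (d : ℕ) {Ω : Type*}
    [MeasurableSpace Ω] (μ : Measure Ω) [IsProbabilityMeasure μ]
    (L : S → Ω → S) (W : S → S → Ω → EuclideanSpace ℝ (Fin d))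
    (hpos : ∀ s t : S, 0 < (μ {ω | L s ω = t}).toReal)
    (hstoch : ∀ s : S, ∑ t : S, (μ {ω | L s ω = t}).toReal = 1)
    (θ : EuclideanSpace ℝ (Fin d)) (ξ : ℂ) (v : S → ℂ) (hv : v ≠ 0)
    (heig : (charMat μ L W θ).mulVec v = ξ • v) :
    ‖ξ‖ ≤ 1 ∧
      (‖ξ‖ = 1 →
        (∀ s t : S, ‖v s‖ = ‖v t‖) ∧
        ((∀ s : S, ‖v s‖ = 1) →
          ∀ s t : S, charMat μ L W θ s t = ξ * v s * (starRingEnd ℂ) (v t) *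
            charMat μ L W 0 s t)) := by
  classical
  set P : S → S → ℝ := fun s t => (μ {ω | L s ω = t}).toReal with hPdef
  -- the integral has norm ≤ 1
  have hEnorm : ∀ (θ' : EuclideanSpace ℝ (Fin d)) (s t : S),
      ‖∫ ω, Complex.exp (2 * Real.pi * Complex.I *
        ((inner ℝ θ' (W s t ω) : ℝ) : ℂ)) ∂μ‖ ≤ 1 := by
    intro θ' s t
    have h1 : ∀ ω : Ω, ‖Complex.exp (2 * Real.pi * Complex.I *
        ((inner ℝ θ' (W s t ω) : ℝ) : ℂ))‖ = 1 := by
      intro ω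
      rw [Complex.norm_exp]
      simp [Complex.mul_re, Complex.mul_im]
    calc ‖∫ ω, Complex.exp (2 * Real.pi * Complex.I *
          ((inner ℝ θ' (W s t ω) : ℝ) : ℂ)) ∂μ‖
        ≤ ∫ ω, ‖Complex.exp (2 * Real.pi * Complex.I *
          ((inner ℝ θ' (W s t ω) : ℝ) : ℂ))‖ ∂μ := norm_integral_le_integral_norm _
      _ = 1 := by simp only [h1]; simp
  have hnorm : ∀ (θ' : EuclideanSpace ℝ (Fin d)) (s t : S),
      ‖charMat μ L W θ' s t‖ ≤ P s t := by
    intro θ' s t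
    show ‖((P s t : ℝ) : ℂ) * _‖ ≤ P s t
    rw [norm_mul, Complex.norm_real, Real.norm_of_nonneg (hpos s t).le]
    calc P s t * ‖_‖ ≤ P s t * 1 :=
          mul_le_mul_of_nonneg_left (hEnorm θ' s t) (hpos s t).le
      _ = P s t := mul_one _
  have hmv : ∀ s : S, ∑ t : S, charMat μ L W θ s t * v t = ξ * v s := by
    intro s
    have := congrFun heig s
    simpa [Matrix.mulVec, dotProduct] using this
  have hbound : ∀ s : S, ‖ξ‖ * ‖v s‖ ≤ ∑ t : S, P s t * ‖v t‖ := by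
    intro s
    calc ‖ξ‖ * ‖v s‖ = ‖∑ t : S, charMat μ L W θ s t * v t‖ := by
          rw [hmv s, norm_mul]
      _ ≤ ∑ t : S, ‖charMat μ L W θ s t * v t‖ := norm_sum_le _ _
      _ ≤ ∑ t : S, P s t * ‖v t‖ := Finset.sum_le_sum (fun t _ => by
          rw [norm_mul]
          exact mul_le_mul_of_nonneg_right (hnorm θ s t) (norm_nonneg _))
  obtain ⟨s₁, hs₁⟩ := Function.ne_iff.mp hv
  obtain ⟨s₀, -, hs₀⟩ := Finset.exists_max_image Finset.univ (fun s => ‖v s‖)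
    ⟨s₁, Finset.mem_univ _⟩
  have hM : 0 < ‖v s₀‖ :=
    lt_of_lt_of_le (norm_pos_iff.mpr hs₁) (hs₀ s₁ (Finset.mem_univ _))
  have hrowM : ∀ s : S, ∑ t : S, P s t * ‖v s₀‖ = ‖v s₀‖ := by
    intro s
    rw [← Finset.sum_mul, hstoch s, one_mul]
  have hsum0 : ∑ t : S, P s₀ t * ‖v t‖ ≤ ‖v s₀‖ := by
    calc ∑ t : S, P s₀ t * ‖v t‖ ≤ ∑ t : S, P s₀ t * ‖v s₀‖ :=
          Finset.sum_le_sum (fun t _ =>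
            mul_le_mul_of_nonneg_left (hs₀ t (Finset.mem_univ _)) (hpos s₀ t).le)
      _ = ‖v s₀‖ := hrowM s₀
  have hxi : ‖ξ‖ ≤ 1 := by
    have h := (hbound s₀).trans hsum0
    nlinarith [hM]
  refine ⟨hxi, fun hξ1 => ?_⟩
  have hconst : ∀ t : S, ‖v t‖ = ‖v s₀‖ := by
    by_contra h
    push_neg at h
    obtain ⟨t₀, ht₀⟩ := h
    have hlt : ‖v t₀‖ < ‖v s₀‖ :=
      lt_of_le_of_ne (hs₀ t₀ (Finset.mem_univ _)) ht₀
    have hstrict : ∑ t : S, P s₀ t * ‖v t‖ < ∑ t : S, P s₀ t * ‖v s₀‖ :=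
      Finset.sum_lt_sum
        (fun t _ => mul_le_mul_of_nonneg_left (hs₀ t (Finset.mem_univ _)) (hpos s₀ t).le)
        ⟨t₀, Finset.mem_univ _, mul_lt_mul_of_pos_left hlt (hpos s₀ t₀)⟩
    have : ‖v s₀‖ < ‖v s₀‖ := by
      calc ‖v s₀‖ = ‖ξ‖ * ‖v s₀‖ := by rw [hξ1, one_mul]
        _ ≤ ∑ t : S, P s₀ t * ‖v t‖ := hbound s₀
        _ < ∑ t : S, P s₀ t * ‖v s₀‖ := hstrict
        _ = ‖v s₀‖ := hrowM s₀
    exact lt_irrefl _ this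
  refine ⟨fun s t => by rw [hconst s, hconst t], fun hv1 => ?_⟩
  intro s t
  set u : ℂ := (starRingEnd ℂ) (ξ * v s) with hu
  have hunorm : ‖u‖ = 1 := by
    rw [hu, Complex.norm_conj, norm_mul, hξ1, hv1 s, one_mul]
  have hsum1 : ∑ t' : S, (u * (charMat μ L W θ s t' * v t')).re = ∑ t' : S, P s t' := by
    have hs1 : ∑ t' : S, u * (charMat μ L W θ s t' * v t') = u * (ξ * v s) := by
      rw [← Finset.mul_sum, hmv s]
    have h2 : u * (ξ * v s) = ((1 : ℝ) : ℂ) := by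
      rw [hu, mul_comm, Complex.mul_conj]
      congr 1
      rw [Complex.normSq_eq_norm_sq, norm_mul, hξ1, hv1 s, one_mul,
        one_pow]
    rw [← Complex.re_sum, hs1, h2, Complex.ofReal_re, hstoch s]
  have hterm_le : ∀ t' ∈ Finset.univ, (u * (charMat μ L W θ s t' * v t')).re ≤ P s t' := by
    intro t' _
    calc (u * (charMat μ L W θ s t' * v t')).re
        ≤ ‖u * (charMat μ L W θ s t' * v t')‖ := Complex.re_le_norm _
      _ = ‖charMat μ L W θ s t'‖ := by
          rw [norm_mul, norm_mul, hunorm, hv1 t', one_mul, mul_one]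
      _ ≤ P s t' := hnorm θ s t'
  have heq := (Finset.sum_eq_sum_iff_of_le hterm_le).mp hsum1 t (Finset.mem_univ t)
  have hznorm : ‖u * (charMat μ L W θ s t * v t)‖ ≤ P s t := by
    rw [norm_mul, norm_mul, hunorm, hv1 t, one_mul, mul_one]
    exact hnorm θ s t
  have hz : u * (charMat μ L W θ s t * v t) = ((P s t : ℝ) : ℂ) := by
    set z := u * (charMat μ L W θ s t * v t) with hzdef
    have hnsq : Complex.normSq z = z.re * z.re + z.im * z.im := Complex.normSq_apply z
    have hzsq : Complex.normSq z = ‖z‖ ^ 2 := by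
      rw [Complex.normSq_eq_norm_sq]
    have him2 : z.im ^ 2 ≤ 0 := by nlinarith [norm_nonneg z, heq, hznorm]
    have him : z.im = 0 := by nlinarith [sq_nonneg z.im]
    apply Complex.ext
    · rw [heq, Complex.ofReal_re]
    · rw [him, Complex.ofReal_im]
  have huvnorm : ‖u * v t‖ = 1 := by rw [norm_mul, hunorm, hv1 t, one_mul]
  have hmul1 : (u * v t) * (starRingEnd ℂ) (u * v t) = 1 := by
    rw [Complex.mul_conj, Complex.normSq_eq_norm_sq, huvnorm, one_pow,
      Complex.ofReal_one]
  have hsolve : charMat μ L W θ s t = ((P s t : ℝ) : ℂ) * (starRingEnd ℂ) (u * v t) := by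
    calc charMat μ L W θ s t
        = charMat μ L W θ s t * ((u * v t) * (starRingEnd ℂ) (u * v t)) := by
          rw [hmul1, mul_one]
      _ = (u * (charMat μ L W θ s t * v t)) * (starRingEnd ℂ) (u * v t) := by ring
      _ = ((P s t : ℝ) : ℂ) * (starRingEnd ℂ) (u * v t) := by rw [hz]
  have hconj : (starRingEnd ℂ) (u * v t) = ξ * v s * (starRingEnd ℂ) (v t) := by
    rw [hu, map_mul, Complex.conj_conj]
  have h0 : charMat μ L W 0 s t = ((P s t : ℝ) : ℂ) := by
    show ((P s t : ℝ) : ℂ) * ∫ ω, Complex.exp (2 * Real.pi * Complex.I *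
      ((inner ℝ (0 : EuclideanSpace ℝ (Fin d)) (W s t ω) : ℝ) : ℂ)) ∂μ = _
    have hz0 : ∀ ω : Ω, ((inner ℝ (0 : EuclideanSpace ℝ (Fin d)) (W s t ω) : ℝ) : ℂ) = 0 := by
      intro ω
      rw [inner_zero_left]
      exact Complex.ofReal_zero
    simp [hz0]
  rw [hsolve, hconj, h0]
  ring
end
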